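/- arXiv:1102.3491 — 6 statements merged into one kernel-verified Lean document; each statement's English description precedes it below -/
import Mathlib

section
/- Let M be a strongly base orderable matroid on a finite ground set S, let E be a partition of S into n pairs, and let w : E → ℝ≥0 be a weight function. Let t be a positive integer with t ≤ n, let B ⊆ E be a maximum-weight feasible set of pairs, and let A ⊆ E be a feasible set of pairs that is a (1/n²)-local optimum for (2t+1)-moves (i.e., every (2t+1)-move for A has gain < (1/n²)·w(A)). Then w(A) ≥ (1 − 2/(t+2))·w(B). -/
open Finset

variable {α : Type*} [DecidableEq α]

/-- `E` is a partition of the finite set `S` into pairs: every member of `E` has two elements,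
the members of `E` are pairwise disjoint, and their union is `S`. -/
def IsPairPartition (S : Finset α) (E : Finset (Finset α)) : Prop :=
  (∀ e ∈ E, e.card = 2) ∧ (E : Set (Finset α)).PairwiseDisjoint id ∧ E.biUnion id = S

/-- A matroid is strongly base orderable if for every pair of bases `I`, `J` there is a
bijection `π : I → J` such that for every `K ⊆ I`, the set `π(K) ∪ (I \ K)` is a base. -/
def Matroid.StronglyBaseOrderable (M : Matroid α) : Prop :=
  ∀ I J : Set α, M.IsBase I → M.IsBase J →
    ∃ π : α → α, Set.BijOn π I J ∧ ∀ K ⊆ I, M.IsBase (π '' K ∪ (I \ K))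

/-- A set of pairs `A ⊆ E` is feasible for `M` if the set `⋃ A` of covered elements is
independent in `M`. -/
def FeasibleSet (M : Matroid α) (A : Finset (Finset α)) : Prop :=
  M.Indep ↑(A.biUnion id)

/-- `(Abar, Bbar)` is an `s`-move for the feasible set `A` (inside the set of pairs `E`):
`Abar ⊆ A`, `Bbar ⊆ E \ A`, `|Abar| + |Bbar| ≤ s` and `A Δ (Abar ∪ Bbar)` is feasible.
Its gain is `w Bbar - w Abar`. -/
def IsMove (M : Matroid α) (E A : Finset (Finset α)) (s : ℕ)
    (Abar Bbar : Finset (Finset α)) : Prop :=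
  Abar ⊆ A ∧ Bbar ⊆ E \ A ∧ Abar.card + Bbar.card ≤ s ∧
    FeasibleSet M (symmDiff A (Abar ∪ Bbar))

/-!
Extend `⋃ A` and `⋃ B` to bases `I` and `J` and fix a strong exchange bijection `π : I → J` that
fixes `I ∩ J` pointwise. For any set `W` of pairs of `B \ A`, removing the pairs of `A` that `π`
maps into `⋃ W` and adding `W` keeps the solution feasible, by the exchange property.

Call the elements of the pairs of `B \ A` ports. From a port, go back along `π` into a pair of
`A`, across that pair, forward along `π` to a port, and across its pair: this is a partial
injection on ports, reversed by the involution swapping the two elements of each pair, whose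
orbits are paths and cycles alternating between pairs of `B \ A` and `A \ B`. The pairs met by
`t` consecutive ports, together with the pairs of `A` in conflict with them, form a
`(2t+1)`-move. Weighting these windows so that every port is covered with total weight exactly
`t`, every pair of `B \ A` is gained with weight `2t` and every pair of `A \ B` is lost with
weight at most `2t + 2`. The family has total weight at most `2tn ≤ 2n²`, so summing the
local-optimality inequalities gives `2t w(B \ A) ≤ (2t + 2) w(A \ B) + 2 w(A)`, which rearranges
to the claim.
-/

lemma ite_or_le_add {p q : Prop} [Decidable p] [Decidable q] {a : ℝ} (ha : 0 ≤ a) :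
    (if p ∨ q then a else 0) ≤ (if p then a else 0) + (if q then a else 0) := by
  split_ifs <;> simp_all

lemma sum_ite_exists_le_sum {ι κ : Type*} {s : Finset ι} {U : Finset κ} {f : ι → ℝ}
    (hf : ∀ i ∈ s, 0 ≤ f i) (p : κ → ι → Prop) [∀ u i, Decidable (p u i)]
    [∀ i, Decidable (∃ u ∈ U, p u i)] :
    ∑ i ∈ s, (if ∃ u ∈ U, p u i then f i else 0) ≤ ∑ u ∈ U, ∑ i ∈ s, if p u i then f i else 0 := by
  rw [sum_comm]
  refine sum_le_sum fun i hi => ?_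
  have hnn : ∀ u ∈ U, 0 ≤ if p u i then f i else 0 := fun u _ => ite_nonneg (hf i hi) le_rfl
  split_ifs with h
  · obtain ⟨u, hu, hpu⟩ := h
    exact (if_pos hpu).symm.le.trans (single_le_sum hnn hu)
  · exact sum_nonneg hnn

lemma symmDiff_union_eq_sdiff_union {A C W : Finset α} (hC : C ⊆ A) (hW : Disjoint A W) :
    symmDiff A (C ∪ W) = (A \ C) ∪ W := by
  ext e
  have h1 : e ∈ C → e ∈ A := @hC e
  have h2 : e ∈ A → e ∉ W := fun h => disjoint_left.mp hW h
  simp only [mem_symmDiff, mem_union, mem_sdiff]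
  tauto

section Averaging

variable {ι κ : Type*} [DecidableEq κ] {F : Finset ι} {UA UB : Finset κ}
  {MA MB : ι → Finset κ} {ρ : ι → ℝ} {w : κ → ℝ}

lemma sum_mul_sum_eq_sum_mul_sum_ite {U : Finset κ} {M : ι → Finset κ} (hM : ∀ i ∈ F, M i ⊆ U) :
    ∑ i ∈ F, ρ i * ∑ e ∈ M i, w e = ∑ e ∈ U, w e * ∑ i ∈ F, if e ∈ M i then ρ i else 0 := by
  calc ∑ i ∈ F, ρ i * ∑ e ∈ M i, w e
      = ∑ i ∈ F, ∑ e ∈ U, if e ∈ M i then ρ i * w e else 0 := sum_congr rfl fun i hi => by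
        rw [sum_ite_mem, inter_eq_right.mpr (hM i hi), mul_sum]
    _ = ∑ e ∈ U, w e * ∑ i ∈ F, if e ∈ M i then ρ i else 0 := by
        rw [sum_comm]
        refine sum_congr rfl fun e _ => ?_
        rw [mul_sum]
        exact sum_congr rfl fun i _ => by split_ifs <;> ring

theorem sub_le_sum_mul_of_cover {cA cB δ : ℝ} (hρ : ∀ i ∈ F, 0 ≤ ρ i)
    (hMA : ∀ i ∈ F, MA i ⊆ UA) (hMB : ∀ i ∈ F, MB i ⊆ UB)
    (hwA : ∀ a ∈ UA, 0 ≤ w a) (hwB : ∀ b ∈ UB, 0 ≤ w b)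
    (hgain : ∀ i ∈ F, ∑ b ∈ MB i, w b - ∑ a ∈ MA i, w a ≤ δ)
    (hcovA : ∀ a ∈ UA, ∑ i ∈ F, (if a ∈ MA i then ρ i else 0) ≤ cA)
    (hcovB : ∀ b ∈ UB, cB ≤ ∑ i ∈ F, if b ∈ MB i then ρ i else 0) :
    cB * ∑ b ∈ UB, w b - cA * ∑ a ∈ UA, w a ≤ (∑ i ∈ F, ρ i) * δ := by
  have hB : cB * ∑ b ∈ UB, w b ≤ ∑ i ∈ F, ρ i * ∑ b ∈ MB i, w b := by
    rw [sum_mul_sum_eq_sum_mul_sum_ite hMB, mul_sum]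
    exact sum_le_sum fun b hb => by
      rw [mul_comm]
      exact mul_le_mul_of_nonneg_left (hcovB b hb) (hwB b hb)
  have hA : ∑ i ∈ F, ρ i * ∑ a ∈ MA i, w a ≤ cA * ∑ a ∈ UA, w a := by
    rw [sum_mul_sum_eq_sum_mul_sum_ite hMA, mul_sum]
    exact sum_le_sum fun a ha => by
      rw [mul_comm cA]
      exact mul_le_mul_of_nonneg_left (hcovA a ha) (hwA a ha)
  have hgain' : ∑ i ∈ F, ρ i * (∑ b ∈ MB i, w b - ∑ a ∈ MA i, w a) ≤ ∑ i ∈ F, ρ i * δ :=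
    sum_le_sum fun i hi => mul_le_mul_of_nonneg_left (hgain i hi) (hρ i hi)
  simp only [mul_sub, sum_sub_distrib, ← sum_mul] at hgain'
  linarith

end Averaging

lemma one_sub_two_div_mul_sum_le {ι : Type*} [DecidableEq ι] {A B : Finset ι} {w : ι → ℝ}
    (hw : ∀ e ∈ A, 0 ≤ w e) {t : ℝ} (ht : 0 ≤ t)
    (h : 2 * t * ∑ e ∈ B \ A, w e - (2 * t + 2) * ∑ e ∈ A \ B, w e ≤ 2 * ∑ e ∈ A, w e) :
    (1 - 2 / (t + 2)) * ∑ e ∈ B, w e ≤ ∑ e ∈ A, w e := by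
  have hAB : 0 ≤ ∑ e ∈ A \ B, w e := sum_nonneg fun e he => hw e (mem_sdiff.mp he).1
  have hI : 0 ≤ ∑ e ∈ B ∩ A, w e := sum_nonneg fun e he => hw e (mem_inter.mp he).2
  have hB := sum_inter_add_sum_sdiff B A w
  have hA := sum_inter_add_sum_sdiff A B w
  rw [inter_comm] at hA
  rw [one_sub_div (by positivity), add_sub_cancel_right, div_mul_eq_mul_div,
    div_le_iff₀ (by positivity)]
  nlinarith

namespace Matroid

def IsExchangeBijOn (M : Matroid α) (π : α → α) (I J : Set α) : Prop :=
  Set.BijOn π I J ∧ ∀ K ⊆ I, M.IsBase (π '' K ∪ (I \ K))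

theorem IsExchangeBijOn.comp_swap {M : Matroid α} {π : α → α} {I J : Set α} {y z : α}
    (hπ : M.IsExchangeBijOn π I J) (hy : y ∈ I) (hz : z ∈ I) (hyz : π y = z) :
    M.IsExchangeBijOn (π ∘ Equiv.swap z y) I J := by
  refine ⟨hπ.1.comp (Equiv.bijOn_swap hz hy), fun K hK => ?_⟩
  by_cases hyK : y ∈ K
  · convert hπ.2 (insert z K) (Set.insert_subset hz hK) using 1
    ext w
    simp only [Set.mem_union, Set.mem_image, Function.comp_apply, Set.mem_sdiff,
      Equiv.swap_apply_def, Set.mem_insert_iff]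
    grind
  · convert hπ.2 (K \ {z}) (Set.sdiff_subset.trans hK) using 1
    ext w
    simp only [Set.mem_union, Set.mem_image, Function.comp_apply, Set.mem_sdiff,
      Equiv.swap_apply_def, Set.mem_singleton_iff]
    grind

/-- If `f z ≠ z` for some `z ∈ I ∩ J`, composing `f` with the transposition of `z` and `f⁻¹ z`
fixes `z` without unfixing any other point. -/
theorem IsExchangeBijOn.exists_fix_inter {M : Matroid α} {f : α → α} {I J : Set α}
    (hf : M.IsExchangeBijOn f I J) (hfin : (I ∩ J).Finite) :
    ∃ π, M.IsExchangeBijOn π I J ∧ ∀ z ∈ I ∩ J, π z = z := by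
  induction h : {z ∈ I ∩ J | f z ≠ z}.ncard using Nat.strong_induction_on generalizing f with
  | _ n ih =>
  obtain hfix | ⟨z, ⟨hzI, hzJ⟩, hfz⟩ := {z ∈ I ∩ J | f z ≠ z}.eq_empty_or_nonempty
  · exact ⟨f, hf, fun z hz => not_not.mp fun hne => hfix.subset ⟨hz, hne⟩⟩
  obtain ⟨y, hyI, hyz⟩ := hf.1.surjOn hzJ
  refine ih _ (h ▸ Set.ncard_lt_ncard ?_ (hfin.subset (Set.sep_subset _ _)))
    (hf.comp_swap hyI hzI hyz) rfl
  refine ⟨fun w ⟨hw, hne⟩ => ⟨hw, ?_⟩, fun hsub => (hsub ⟨⟨hzI, hzJ⟩, hfz⟩).2 ?_⟩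
  · simp only [Function.comp_apply, Equiv.swap_apply_def] at hne ⊢
    grind
  · simp [Equiv.swap_apply_left, hyz]

theorem StronglyBaseOrderable.exists_isExchangeBijOn_fix_inter {M : Matroid α}
    (hM : M.StronglyBaseOrderable) {I J : Set α} (hI : M.IsBase I) (hJ : M.IsBase J)
    (hfin : (I ∩ J).Finite) :
    ∃ π, M.IsExchangeBijOn π I J ∧ ∀ z ∈ I ∩ J, π z = z :=
  let ⟨_, hf⟩ := hM I J hI hJ
  IsExchangeBijOn.exists_fix_inter hf hfin

end Matroid

structure PairedWalk (β : Type*) where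
  ports : Finset β
  partner : β → β
  next : β → Option β
  partner_involutive : Function.Involutive partner
  partner_mem : ∀ x ∈ ports, partner x ∈ ports
  partner_ne : ∀ x ∈ ports, partner x ≠ x
  mem_of_next : ∀ {x y}, next x = some y → y ∈ ports
  next_partner : ∀ {x y}, next x = some y → next (partner y) = some (partner x)
  next_ne_partner : ∀ x, next x ≠ some (partner x)

namespace PairedWalk

variable {β : Type*} (W : PairedWalk β) {x y z q u v : β} {s U : Finset β} {i j k t : ℕ}

def step (o : Option β) : Option β := o.bind W.next

def iter (i : ℕ) (x : β) : Option β := W.step^[i] (some x)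

@[simp] lemma iter_zero : W.iter 0 x = some x := rfl

lemma iter_succ : W.iter (i + 1) x = (W.iter i x).bind W.next :=
  Function.iterate_succ_apply' _ _ _

lemma step_iterate_none : W.step^[i] none = none :=
  Function.iterate_fixed (f := W.step) rfl i

lemma iter_add : W.iter (i + j) x = (W.iter j x).bind (W.iter i) := by
  rw [iter, Function.iterate_add_apply]
  change W.step^[i] (W.iter j x) = _
  cases W.iter j x with
  | none => exact W.step_iterate_none
  | some y => rfl

lemma iter_add_of_eq (h : W.iter j x = some y) : W.iter (i + j) x = W.iter i y := by
  rw [iter_add, h, Option.bind_some]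

lemma iter_succ_of_next (h : W.next x = some y) : W.iter (i + 1) x = W.iter i y :=
  W.iter_add_of_eq (j := 1) h

lemma iter_succ_eq_some :
    W.iter (i + 1) x = some z ↔ ∃ y, W.iter i x = some y ∧ W.next y = some z := by
  rw [iter_succ, Option.bind_eq_some_iff]

lemma iter_succ_eq_some' :
    W.iter (i + 1) x = some z ↔ ∃ y, W.next x = some y ∧ W.iter i y = some z := by
  change W.step^[i] (W.next x) = _ ↔ _
  cases W.next x with
  | none => simp [step_iterate_none]
  | some y => simp [iter]

lemma mem_ports_of_iter (hx : x ∈ W.ports) (h : W.iter i x = some y) : y ∈ W.ports := by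
  cases i with
  | zero => simp_all
  | succ i => exact W.mem_of_next (W.iter_succ_eq_some.mp h).choose_spec.2

lemma iter_partner (h : W.iter i x = some y) : W.iter i (W.partner y) = some (W.partner x) := by
  induction i generalizing y with
  | zero => simp_all
  | succ i ih =>
    obtain ⟨z, hz, hn⟩ := W.iter_succ_eq_some.mp h
    exact W.iter_succ_eq_some'.mpr ⟨_, W.next_partner hn, ih hz⟩

lemma iter_partner_iff : W.iter i (W.partner y) = some (W.partner x) ↔ W.iter i x = some y := by
  refine ⟨fun h => ?_, W.iter_partner⟩
  simpa only [W.partner_involutive _] using W.iter_partner h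

lemma next_injective (h : W.next x = some z) (h' : W.next y = some z) : x = y :=
  W.partner_involutive.injective (Option.some_injective _
    ((W.next_partner h).symm.trans (W.next_partner h')))

lemma iter_injective (h : W.iter i x = some z) (h' : W.iter i y = some z) : x = y :=
  W.partner_involutive.injective (Option.some_injective _
    ((W.iter_partner h).symm.trans (W.iter_partner h')))

lemma iter_ne_partner (hx : x ∈ W.ports) : W.iter i x ≠ some (W.partner x) := by
  induction i using Nat.strong_induction_on generalizing x with
  | _ i ih =>
  match i with
  | 0 => exact fun h => W.partner_ne x hx (Option.some_injective _ h).symm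
  | 1 => exact W.next_ne_partner x
  | m + 2 =>
    intro h
    obtain ⟨x', hx', h⟩ := W.iter_succ_eq_some'.mp h
    obtain ⟨u, hu, hn⟩ := W.iter_succ_eq_some.mp h
    rw [W.next_injective hn (W.next_partner hx')] at hu
    exact ih m (by omega) (W.mem_of_next hx') hu

def IsStart (x : β) : Prop := ∀ y, W.next y ≠ some x

lemma isStart_partner_iff : W.IsStart (W.partner y) ↔ W.next y = none := by
  refine ⟨fun h => ?_, fun h w hw => ?_⟩
  · cases hy : W.next y with
    | none => rfl
    | some z => exact absurd (W.next_partner hy) (h _)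
  · simpa [W.partner_involutive y, h] using W.next_partner hw

def IsCyclic (t : ℕ) (x : β) : Prop := ∃ p, 0 < p ∧ p ≤ t ∧ W.iter p x = some x

lemma eq_of_iter_eq_of_not_isCyclic (hq : ¬ W.IsCyclic t q) (hi : W.iter i x = some q)
    (hj : W.iter j x = some q) (hit : i < t) (hjt : j < t) : i = j := by
  by_contra hne
  wlog hij : i < j generalizing i j
  · exact this hj hi hjt hit (Ne.symm hne) (by omega)
  refine hq ⟨j - i, by omega, by omega, ?_⟩
  rw [← W.iter_add_of_eq hi, Nat.sub_add_cancel hij.le, hj]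

section Window

variable [DecidableEq β]

def window (x : β) (k : ℕ) : Finset β := (range k).biUnion fun i => (W.iter i x).toFinset

lemma mem_window : y ∈ W.window x k ↔ ∃ i < k, W.iter i x = some y := by
  simp [window]

lemma card_window_le : (W.window x k).card ≤ k := by
  refine card_biUnion_le.trans ((sum_le_card_nsmul _ _ 1 fun i _ => ?_).trans (by simp))
  cases W.iter i x <;> simp

lemma window_subset_ports (hx : x ∈ W.ports) : W.window x k ⊆ W.ports := fun _ hy =>
  let ⟨_, _, h⟩ := W.mem_window.mp hy
  W.mem_ports_of_iter hx h

lemma self_mem_window (hk : 0 < k) : x ∈ W.window x k := W.mem_window.mpr ⟨0, hk, rfl⟩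

lemma window_mono (hk : k ≤ j) : W.window x k ⊆ W.window x j := fun _ hy =>
  let ⟨i, hi, h⟩ := W.mem_window.mp hy
  W.mem_window.mpr ⟨i, hi.trans_le hk, h⟩

end Window

section Cyclic

variable {W}

lemma IsCyclic.of_iter (hx : W.IsCyclic t x) (h : W.iter i x = some y) : W.IsCyclic t y := by
  obtain ⟨p, hp, hpt, hpx⟩ := hx
  refine ⟨p, hp, hpt, ?_⟩
  rw [← W.iter_add_of_eq h, add_comm, W.iter_add_of_eq hpx, h]

lemma IsCyclic.of_iter_eq (hy : W.IsCyclic t y) (h : W.iter i x = some y) : W.IsCyclic t x := by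
  obtain ⟨p, hp, hpt, hpy⟩ := hy
  refine ⟨p, hp, hpt, ?_⟩
  have h1 : W.iter (p + i) x = some y := by rw [W.iter_add_of_eq h, hpy]
  rw [add_comm, iter_add, Option.bind_eq_some_iff] at h1
  obtain ⟨x', hx', hx'y⟩ := h1
  rwa [W.iter_injective hx'y h] at hx'

lemma IsCyclic.exists_iter_eq (hx : W.IsCyclic t x) (h : W.iter i x = some y) :
    ∃ j, W.iter j y = some x := by
  obtain ⟨p, hp, -, hpx⟩ := hx
  refine ⟨p * i - i, ?_⟩
  rw [← W.iter_add_of_eq h, Nat.sub_add_cancel (Nat.le_mul_of_pos_left i hp)]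
  exact Function.IsPeriodicPt.mul_const (f := W.step) hpx i

lemma IsCyclic.partner (hx : W.IsCyclic t x) : W.IsCyclic t (W.partner x) :=
  let ⟨p, hp, hpt, hpx⟩ := hx
  ⟨p, hp, hpt, W.iter_partner hpx⟩

lemma IsStart.not_isCyclic (hx : W.IsStart x) : ¬ W.IsCyclic t x := by
  rintro ⟨p, hp, -, hpx⟩
  obtain ⟨i, rfl⟩ : ∃ i, p = i + 1 := ⟨p - 1, by omega⟩
  obtain ⟨y, -, hy⟩ := W.iter_succ_eq_some.mp hpx
  exact hx y hy

variable [DecidableEq β]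

lemma IsCyclic.mem_window_iff (hx : W.IsCyclic t x) :
    y ∈ W.window x t ↔ ∃ i, W.iter i x = some y := by
  obtain ⟨p, hp, hpt, hpx⟩ := hx
  refine ⟨fun h => ?_, fun ⟨i, hi⟩ => W.mem_window.mpr ⟨i % p, (Nat.mod_lt i hp).trans_le hpt, ?_⟩⟩
  · obtain ⟨i, -, hi⟩ := W.mem_window.mp h
    exact ⟨i, hi⟩
  · rw [← hi]
    exact Function.IsPeriodicPt.iterate_mod_apply (f := W.step) hpx i

lemma IsCyclic.mem_window_comm (hq : W.IsCyclic t q) : q ∈ W.window x t ↔ x ∈ W.window q t := by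
  constructor
  · intro h
    obtain ⟨i, -, hi⟩ := W.mem_window.mp h
    exact hq.mem_window_iff.mpr ((hq.of_iter_eq hi).exists_iter_eq hi)
  · intro h
    obtain ⟨i, hi⟩ := hq.mem_window_iff.mp h
    exact (hq.of_iter hi).mem_window_iff.mpr (hq.exists_iter_eq hi)

lemma IsCyclic.window_eq (hq : W.IsCyclic t q) (hx : x ∈ W.window q t) :
    W.window x t = W.window q t := by
  obtain ⟨i, hi⟩ := hq.mem_window_iff.mp hx
  obtain ⟨j, hj⟩ := hq.exists_iter_eq hi
  ext y
  rw [(hq.of_iter hi).mem_window_iff, hq.mem_window_iff]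
  constructor
  · rintro ⟨k, hk⟩
    exact ⟨k + i, by rw [W.iter_add_of_eq hi, hk]⟩
  · rintro ⟨k, hk⟩
    exact ⟨k + j, by rw [W.iter_add_of_eq hj, hk]⟩

end Cyclic

section Cover

open Classical

lemma sum_range_iter_elim (r : β) :
    ∑ i ∈ range t, (W.iter i r).elim 0
      (fun y => if W.IsStart (W.partner y) then ((t : ℝ) - i) else 1) = t := by
  induction t generalizing r with
  | zero => simp
  | succ t ih =>
    rw [sum_range_succ']
    cases hr : W.next r with
    | none =>
      have hnone : ∀ i, W.iter (i + 1) r = none := fun i => by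
        change W.step^[i] (W.next r) = none
        rw [hr, step_iterate_none]
      simp [hnone, W.isStart_partner_iff.mpr hr]
    | some r' =>
      have hterm : ∀ i ∈ range t, (W.iter (i + 1) r).elim 0
          (fun y => if W.IsStart (W.partner y) then ((↑(t + 1) : ℝ) - ↑(i + 1)) else 1) =
          (W.iter i r').elim 0 (fun y => if W.IsStart (W.partner y) then ((t : ℝ) - i) else 1) :=
        fun i _ => by
          simp only [W.iter_succ_of_next hr, Nat.cast_add, Nat.cast_one,
            add_sub_add_right_eq_sub]
      rw [sum_congr rfl hterm, ih]
      simp [W.isStart_partner_iff, hr]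

variable [DecidableEq β]

/-- Every port starts a window of length `t`, of weight `t / ℓ` on a cycle of length `ℓ ≤ t`
(where that window is the whole cycle); a start of a path also gets a window of each shorter
length, so that the ports near it are still covered `t` times. -/
noncomputable def weight (t : ℕ) (i : β × ℕ) : ℝ :=
  if W.IsStart i.1 then 1
  else if i.2 = t then (if W.IsCyclic t i.1 then t / (W.window i.1 t).card else 1) else 0

def moves (t : ℕ) : Finset (β × ℕ) := W.ports ×ˢ Icc 1 t

noncomputable def cover (t : ℕ) (q : β) : ℝ :=
  ∑ i ∈ W.moves t, if q ∈ W.window i.1 i.2 then W.weight t i else 0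

lemma weight_nonneg (i : β × ℕ) : 0 ≤ W.weight t i := by
  unfold weight
  split_ifs <;> positivity

lemma weight_of_not_isCyclic (hx : ¬ W.IsCyclic t x) :
    W.weight t (x, k) = if W.IsStart x then 1 else if k = t then 1 else 0 := by
  simp [weight, hx]

lemma sum_weight_le (x : β) : ∑ k ∈ Icc 1 t, W.weight t (x, k) ≤ t := by
  by_cases hs : W.IsStart x
  · simp [weight, hs]
  simp only [weight, hs, if_false, sum_ite_eq', mem_Icc]
  split_ifs with ht hc
  · exact div_le_self (Nat.cast_nonneg t)
      (by exact_mod_cast card_pos.mpr ⟨x, W.self_mem_window ht.1⟩)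
  · exact_mod_cast ht.1
  · exact Nat.cast_nonneg t

lemma sum_weight_le_one (hs : ¬ W.IsStart x) (hc : ¬ W.IsCyclic t x) :
    ∑ k ∈ Icc 1 t, W.weight t (x, k) ≤ 1 := by
  simp only [W.weight_of_not_isCyclic hc, hs, if_false, sum_ite_eq']
  split_ifs <;> norm_num

lemma sum_moves_weight_le : ∑ i ∈ W.moves t, W.weight t i ≤ t * W.ports.card := by
  rw [moves, sum_product, mul_comm]
  exact (sum_le_card_nsmul _ _ _ fun x _ => W.sum_weight_le x).trans_eq (nsmul_eq_mul _ _)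

lemma sum_Icc_weight_of_not_isCyclic (hq : ¬ W.IsCyclic t q) (x : β) :
    ∑ k ∈ Icc 1 t, (if q ∈ W.window x k then W.weight t (x, k) else 0) =
      ∑ i ∈ range t, if W.iter i x = some q then
        (if W.IsStart x then ((t : ℝ) - i) else 1) else 0 := by
  by_cases h : ∃ i < t, W.iter i x = some q
  · obtain ⟨i, hit, hi⟩ := h
    have huniq : ∀ j < t, W.iter j x = some q → j = i := fun j hjt hj =>
      W.eq_of_iter_eq_of_not_isCyclic hq hj hi hjt hit
    have hfilter : (Icc 1 t).filter (fun k => q ∈ W.window x k) = Ioc i t := by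
      ext k
      simp only [mem_filter, mem_Icc, mem_Ioc, mem_window]
      constructor
      · rintro ⟨hk, j, hjk, hj⟩
        have := huniq j (by omega) hj
        omega
      · exact fun hk => ⟨⟨by omega, hk.2⟩, i, hk.1, hi⟩
    have hx : ¬ W.IsCyclic t x := fun hx => hq (hx.of_iter hi)
    rw [← sum_filter, hfilter, sum_eq_single_of_mem i (mem_range.mpr hit)
      fun j hj hji => if_neg fun h => hji (huniq j (mem_range.mp hj) h), if_pos hi]
    simp only [W.weight_of_not_isCyclic hx]
    split_ifs with hs
    · simp [Nat.cast_sub hit.le]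
    · simp [hit]
  · push Not at h
    refine (sum_eq_zero fun k hk => if_neg fun hqk => ?_).trans
      (sum_eq_zero fun i hi => if_neg (h i (mem_range.mp hi))).symm
    obtain ⟨i, hik, hi⟩ := W.mem_window.mp hqk
    exact h i (by simp at hk; omega) hi

lemma sum_ports_iter_eq_some (hq : q ∈ W.ports) (f : β → ℝ) :
    ∑ x ∈ W.ports, (if W.iter i x = some q then f x else 0) =
      (W.iter i (W.partner q)).elim 0 (f ∘ W.partner) := by
  cases h : W.iter i (W.partner q) with
  | none =>
    refine sum_eq_zero fun x _ => if_neg fun hx => ?_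
    rw [← W.iter_partner_iff, h] at hx
    cases hx
  | some y =>
    have hy : y ∈ W.ports := W.mem_ports_of_iter (W.partner_mem q hq) h
    have hiff : ∀ x, W.iter i x = some q ↔ x = W.partner y := fun x => by
      rw [← W.iter_partner_iff, h, Option.some_inj, eq_comm, W.partner_involutive.eq_iff]
    simp only [hiff, sum_ite_eq', W.partner_mem y hy, if_true, Option.elim, Function.comp]

/-- Reading the walk backwards from `q` (that is, forwards from `partner q`), its `i`-th
predecessor contributes `1`, or `t - i` if it is the start of a path. -/
lemma cover_eq_of_not_isCyclic (hq : q ∈ W.ports) (hqc : ¬ W.IsCyclic t q) : W.cover t q = t := by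
  calc W.cover t q
      = ∑ x ∈ W.ports, ∑ k ∈ Icc 1 t, (if q ∈ W.window x k then W.weight t (x, k) else 0) :=
        sum_product _ _ _
    _ = ∑ i ∈ range t, ∑ x ∈ W.ports, if W.iter i x = some q then
          (if W.IsStart x then ((t : ℝ) - i) else 1) else 0 := by
        rw [sum_congr rfl fun x _ => W.sum_Icc_weight_of_not_isCyclic hqc x, sum_comm]
    _ = ∑ i ∈ range t, (W.iter i (W.partner q)).elim 0
          (fun y => if W.IsStart (W.partner y) then ((t : ℝ) - i) else 1) :=
        sum_congr rfl fun i _ => W.sum_ports_iter_eq_some hq _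
    _ = t := W.sum_range_iter_elim _

lemma cover_eq_of_isCyclic (hq : q ∈ W.ports) (hqc : W.IsCyclic t q) : W.cover t q = t := by
  have ht : 0 < t := let ⟨_, hp, hpt, _⟩ := hqc; hp.trans_le hpt
  have hO : (0 : ℝ) < (W.window q t).card := by
    exact_mod_cast card_pos.mpr ⟨q, W.self_mem_window ht⟩
  have hrow : ∀ x, ∑ k ∈ Icc 1 t, (if q ∈ W.window x k then W.weight t (x, k) else 0) =
      if x ∈ W.window q t then (t : ℝ) / (W.window q t).card else 0 := by
    intro x
    by_cases hx : x ∈ W.window q t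
    · obtain ⟨i, hi⟩ := hqc.mem_window_iff.mp hx
      have hxc := hqc.of_iter hi
      have hxs : ¬ W.IsStart x := fun h => h.not_isCyclic hxc
      rw [if_pos hx, sum_eq_single_of_mem t (right_mem_Icc.mpr ht) fun k _ hk => by
        simp [weight, hxs, hk]]
      simp [weight, hxs, hxc, W.self_mem_window ht, hqc.window_eq hx]
    · rw [if_neg hx]
      exact sum_eq_zero fun k hk => if_neg fun hqk =>
        hx (hqc.mem_window_comm.mp (W.window_mono (mem_Icc.mp hk).2 hqk))
  rw [cover, moves, sum_product, sum_congr rfl fun x _ => hrow x, sum_ite_mem,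
    inter_eq_right.mpr (W.window_subset_ports hq), sum_const, nsmul_eq_mul]
  field_simp

theorem cover_eq (hq : q ∈ W.ports) : W.cover t q = t := by
  by_cases hqc : W.IsCyclic t q
  · exact W.cover_eq_of_isCyclic hq hqc
  · exact W.cover_eq_of_not_isCyclic hq hqc

lemma partner_notMem_window (hx : x ∈ W.ports) (hq : q ∈ W.window x k) :
    W.partner q ∉ W.window x j := fun hq' => by
  obtain ⟨i, -, hi⟩ := W.mem_window.mp hq
  obtain ⟨i', -, hi'⟩ := W.mem_window.mp hq'
  have hqP := W.mem_ports_of_iter hx hi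
  rcases le_total i i' with h | h
  · refine W.iter_ne_partner hqP (i := i' - i) ?_
    rwa [← W.iter_add_of_eq hi, Nat.sub_add_cancel h]
  · refine W.iter_ne_partner (W.partner_mem q hqP) (i := i - i') ?_
    rwa [← W.iter_add_of_eq hi', Nat.sub_add_cancel h, W.partner_involutive]

def pairs (s : Finset β) : Finset (Finset β) := s.image fun u => {u, W.partner u}

lemma pair_mem_pairs_iff : {q, W.partner q} ∈ W.pairs s ↔ q ∈ s ∨ W.partner q ∈ s := by
  have hpair : ∀ u, ({u, W.partner u} : Finset β) = {q, W.partner q} ↔ u = q ∨ u = W.partner q := by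
    intro u
    constructor
    · intro h
      have hu : u ∈ ({q, W.partner q} : Finset β) := h ▸ mem_insert_self _ _
      simpa using hu
    · rintro (rfl | rfl)
      · rfl
      · rw [W.partner_involutive, pair_comm]
  simp only [pairs, mem_image, hpair]
  aesop

theorem sum_weight_pair_mem (hq : q ∈ W.ports) :
    ∑ i ∈ W.moves t, (if {q, W.partner q} ∈ W.pairs (W.window i.1 i.2) then W.weight t i else 0) =
      2 * t := by
  have hsplit : ∀ i ∈ W.moves t,
      (if {q, W.partner q} ∈ W.pairs (W.window i.1 i.2) then W.weight t i else 0) =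
      (if q ∈ W.window i.1 i.2 then W.weight t i else 0) +
        (if W.partner q ∈ W.window i.1 i.2 then W.weight t i else 0) := by
    intro i hi
    have hx : i.1 ∈ W.ports := (mem_product.mp hi).1
    simp only [W.pair_mem_pairs_iff]
    by_cases h : q ∈ W.window i.1 i.2
    · simp [h, W.partner_notMem_window hx h]
    · simp [h]
  rw [sum_congr rfl hsplit, sum_add_distrib]
  change W.cover t q + W.cover t (W.partner q) = _
  rw [W.cover_eq hq, W.cover_eq (W.partner_mem q hq)]
  ring

lemma sum_moves_fst_eq (hy : y ∈ W.ports) :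
    ∑ i ∈ W.moves t, (if i.1 = y then W.weight t i else 0) = ∑ k ∈ Icc 1 t, W.weight t (y, k) := by
  rw [moves, sum_product, sum_eq_single_of_mem y hy fun x _ hx => by simp [hx]]
  simp

lemma sum_slot_le (hu : u ∈ W.ports) :
    ∑ i ∈ W.moves t, (if u ∈ W.window i.1 i.2 ∨ i.1 = W.partner u then W.weight t i else 0) ≤
      t + ∑ k ∈ Icc 1 t, W.weight t (W.partner u, k) := by
  rw [← W.cover_eq hu, ← W.sum_moves_fst_eq (W.partner_mem u hu), cover, ← sum_add_distrib]
  exact sum_le_sum fun i _ => ite_or_le_add (W.weight_nonneg i)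

/-- On a cycle, the window at the partner of `u` is the whole cycle and already contains `v`. -/
lemma sum_slots_le_of_isCyclic (hu : u ∈ W.ports) (hv : v ∈ W.ports)
    (huv : W.next u = some (W.partner v)) (hvu : W.next v = some (W.partner u))
    (hc : W.IsCyclic t u) :
    ∑ i ∈ W.moves t, (if ∃ w ∈ ({u, v} : Finset β), w ∈ W.window i.1 i.2 ∨ i.1 = W.partner w
      then W.weight t i else 0) ≤ 2 * t := by
  have hvc : W.IsCyclic t v := hc.partner.of_iter_eq (i := 1) hvu
  have hfull : ∀ w k, W.IsCyclic t w → W.weight t (w, k) ≠ 0 → k = t := fun w k hw h => by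
    by_contra hk
    have hs : ¬ W.IsStart w := fun h => h.not_isCyclic hw
    exact h (by simp [weight, hk, hs])
  have hmem : ∀ i : β × ℕ, W.weight t i ≠ 0 →
      (∃ w ∈ ({u, v} : Finset β), w ∈ W.window i.1 i.2 ∨ i.1 = W.partner w) →
      u ∈ W.window i.1 i.2 ∨ v ∈ W.window i.1 i.2 := by
    rintro ⟨x, k⟩ hw ⟨w, hw', h | rfl⟩
    · simp only [mem_insert, mem_singleton] at hw'
      rcases hw' with rfl | rfl <;> simp [h]
    · simp only [mem_insert, mem_singleton] at hw'
      rcases hw' with rfl | rfl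
      · rw [hfull _ _ hc.partner hw]
        exact Or.inr (hc.partner.mem_window_iff.mpr (hvc.exists_iter_eq (i := 1) hvu))
      · rw [hfull _ _ hvc.partner hw]
        exact Or.inl (hvc.partner.mem_window_iff.mpr (hc.exists_iter_eq (i := 1) huv))
  calc _ ≤ ∑ i ∈ W.moves t, ((if u ∈ W.window i.1 i.2 then W.weight t i else 0) +
        (if v ∈ W.window i.1 i.2 then W.weight t i else 0)) := by
        refine sum_le_sum fun i _ => ?_
        by_cases hw : W.weight t i = 0
        · simp [hw]
        by_cases h : ∃ w ∈ ({u, v} : Finset β), w ∈ W.window i.1 i.2 ∨ i.1 = W.partner w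
        · rw [if_pos h]
          exact (if_pos (hmem i hw h) (t := W.weight t i) (e := 0)).symm.le.trans
            (ite_or_le_add (W.weight_nonneg i))
        · rw [if_neg h]
          exact add_nonneg (ite_nonneg (W.weight_nonneg i) le_rfl)
            (ite_nonneg (W.weight_nonneg i) le_rfl)
    _ = 2 * t := by
        rw [sum_add_distrib]
        change W.cover t u + W.cover t v = _
        rw [W.cover_eq hu, W.cover_eq hv]
        ring

/-- If `U = {u, v}`, the partners of `u` and `v` are not starts, so off short cycles each of them
starts windows of total weight `1`. -/
theorem sum_weight_slots_le (hU : U ⊆ W.ports) (hcard : U.card ≤ 2)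
    (hnext : ∀ u ∈ U, ∀ v ∈ U, u ≠ v → W.next u = some (W.partner v)) :
    ∑ i ∈ W.moves t, (if ∃ u ∈ U, u ∈ W.window i.1 i.2 ∨ i.1 = W.partner u
      then W.weight t i else 0) ≤ 2 * t + 2 := by
  have hunion := (sum_ite_exists_le_sum (fun i _ => W.weight_nonneg i) _).trans
    (sum_le_sum fun u hu => W.sum_slot_le (t := t) (hU hu))
  obtain h | h := Nat.lt_or_ge U.card 2
  · refine hunion.trans ?_
    calc ∑ u ∈ U, ((t : ℝ) + ∑ k ∈ Icc 1 t, W.weight t (W.partner u, k))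
        ≤ ∑ u ∈ U, (2 * t : ℝ) :=
          sum_le_sum fun u _ => by linarith [W.sum_weight_le (t := t) (W.partner u)]
      _ ≤ 2 * t + 2 := by
        have : (U.card : ℝ) ≤ 1 := by exact_mod_cast Nat.lt_succ_iff.mp h
        rw [sum_const, nsmul_eq_mul]
        nlinarith [(Nat.cast_nonneg t : (0 : ℝ) ≤ t)]
  obtain ⟨u, v, huv, rfl⟩ := card_eq_two.mp (le_antisymm hcard h)
  have hu : u ∈ W.ports := hU (by simp)
  have hv : v ∈ W.ports := hU (by simp)
  have huv' : W.next u = some (W.partner v) := hnext u (by simp) v (by simp) huv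
  have hvu' : W.next v = some (W.partner u) := hnext v (by simp) u (by simp) huv.symm
  by_cases hc : W.IsCyclic t u
  · exact (W.sum_slots_le_of_isCyclic hu hv huv' hvu' hc).trans (by linarith)
  have hvc : ¬ W.IsCyclic t v := fun h => hc (h.partner.of_iter_eq (i := 1) huv')
  have hstep : ∀ w w', W.next w' = some (W.partner w) → ¬ W.IsCyclic t w →
      ∑ k ∈ Icc 1 t, W.weight t (W.partner w, k) ≤ 1 := fun w w' hw' hwc =>
    W.sum_weight_le_one (fun h => h w' hw')
      (fun h => hwc (by simpa [W.partner_involutive w] using h.partner))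
  refine hunion.trans ?_
  rw [sum_pair huv]
  linarith [hstep u v hvu' hc, hstep v u huv' hvc]

end Cover

end PairedWalk

open Classical in
noncomputable def pairPartner (E : Finset (Finset α)) (z : α) : α :=
  if h : ∃ y ≠ z, ∃ e ∈ E, z ∈ e ∧ y ∈ e then h.choose else z

namespace IsPairPartition

variable {S : Finset α} {E C : Finset (Finset α)} {e e' : Finset α} {y z : α}

lemma eq_of_mem (hE : IsPairPartition S E) (he : e ∈ E) (he' : e' ∈ E) (hz : z ∈ e)
    (hz' : z ∈ e') : e = e' := by
  by_contra hne
  exact disjoint_left.mp (hE.2.1 he he' hne) hz hz'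

lemma pairPartner_ne_and_mem (hE : IsPairPartition S E) (he : e ∈ E) (hz : z ∈ e) :
    pairPartner E z ≠ z ∧ pairPartner E z ∈ e := by
  have hex : ∃ y ≠ z, ∃ e ∈ E, z ∈ e ∧ y ∈ e := by
    obtain ⟨y, hy, hne⟩ := exists_mem_ne (by rw [hE.1 e he]; norm_num) z
    exact ⟨y, hne, e, he, hz, hy⟩
  obtain ⟨hne, e', he', hze', hye'⟩ := hex.choose_spec
  rw [pairPartner, dif_pos hex]
  exact ⟨hne, hE.eq_of_mem he' he hze' hz ▸ hye'⟩

lemma eq_pair (hE : IsPairPartition S E) (he : e ∈ E) (hz : z ∈ e) :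
    e = {z, pairPartner E z} := by
  obtain ⟨hne, hmem⟩ := hE.pairPartner_ne_and_mem he hz
  refine (eq_of_subset_of_card_le (by simp [insert_subset_iff, hz, hmem]) ?_).symm
  rw [hE.1 e he, card_pair hne.symm]

lemma mem_iff (hE : IsPairPartition S E) (he : e ∈ E) (hz : z ∈ e) :
    y ∈ e ↔ y = z ∨ y = pairPartner E z := by
  rw [hE.eq_pair he hz, mem_insert, mem_singleton]

lemma pairPartner_involutive (hE : IsPairPartition S E) : Function.Involutive (pairPartner E) := by
  intro z
  by_cases h : ∃ e ∈ E, z ∈ e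
  · obtain ⟨e, he, hz⟩ := h
    obtain ⟨-, hmem⟩ := hE.pairPartner_ne_and_mem he hz
    obtain ⟨hne', hmem'⟩ := hE.pairPartner_ne_and_mem he hmem
    exact ((hE.mem_iff he hz).mp hmem').resolve_right hne'
  · have hfix : pairPartner E z = z :=
      dif_neg fun ⟨_, _, e, he, hz, _⟩ => h ⟨e, he, hz⟩
    rw [hfix, hfix]

lemma pairPartner_mem_biUnion (hE : IsPairPartition S E) (hC : C ⊆ E)
    (hz : z ∈ C.biUnion id) : pairPartner E z ∈ C.biUnion id := by
  obtain ⟨c, hc, hzc⟩ := mem_biUnion.mp hz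
  exact mem_biUnion.mpr ⟨c, hc, (hE.pairPartner_ne_and_mem (hC hc) hzc).2⟩

lemma pairPartner_ne (hE : IsPairPartition S E) (hC : C ⊆ E) (hz : z ∈ C.biUnion id) :
    pairPartner E z ≠ z := by
  obtain ⟨c, hc, hzc⟩ := mem_biUnion.mp hz
  exact (hE.pairPartner_ne_and_mem (hC hc) hzc).1

end IsPairPartition

section ExchangeWalk

variable {S : Finset α} {E A B : Finset (Finset α)} {π : α → α} {x y z : α}

def ExchangeStep (E A B : Finset (Finset α)) (π : α → α) (x y : α) : Prop :=
  x ∈ (B \ A).biUnion id ∧ y ∈ (B \ A).biUnion id ∧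
    ∃ z ∈ A.biUnion id, π z = x ∧ π (pairPartner E z) = pairPartner E y

open Classical in
noncomputable def exchangeNext (E A B : Finset (Finset α)) (π : α → α) (x : α) : Option α :=
  if h : ∃ y, ExchangeStep E A B π x y then some h.choose else none

lemma exchangeStep_unique (hE : IsPairPartition S E) (hπ : Set.InjOn π ↑(A.biUnion id))
    (h : ExchangeStep E A B π x y) (h' : ExchangeStep E A B π x z) : y = z := by
  obtain ⟨-, -, w, hw, rfl, hwy⟩ := h
  obtain ⟨-, -, w', hw', hw'x, hw'z⟩ := h'
  rw [hπ hw' hw hw'x] at hw'z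
  exact hE.pairPartner_involutive.injective (hwy.symm.trans hw'z)

lemma exchangeNext_eq_some (hE : IsPairPartition S E) (hπ : Set.InjOn π ↑(A.biUnion id)) :
    exchangeNext E A B π x = some y ↔ ExchangeStep E A B π x y := by
  unfold exchangeNext
  split_ifs with h
  · rw [Option.some_inj]
    exact ⟨fun h' => h' ▸ h.choose_spec, exchangeStep_unique hE hπ h.choose_spec⟩
  · exact ⟨nofun, fun h' => absurd ⟨y, h'⟩ h⟩

noncomputable def exchangeWalk (hE : IsPairPartition S E) (hAE : A ⊆ E) (hBE : B ⊆ E)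
    (hπ : Set.InjOn π ↑(A.biUnion id)) : PairedWalk α where
  ports := (B \ A).biUnion id
  partner := pairPartner E
  next := exchangeNext E A B π
  partner_involutive := hE.pairPartner_involutive
  partner_mem _ hx := hE.pairPartner_mem_biUnion (sdiff_subset.trans hBE) hx
  partner_ne _ hx := hE.pairPartner_ne (sdiff_subset.trans hBE) hx
  mem_of_next h := ((exchangeNext_eq_some hE hπ).mp h).2.1
  next_partner h := by
    obtain ⟨hx, hy, z, hz, hzx, hzy⟩ := (exchangeNext_eq_some hE hπ).mp h
    refine (exchangeNext_eq_some hE hπ).mpr ⟨hE.pairPartner_mem_biUnion (sdiff_subset.trans hBE) hy,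
      hE.pairPartner_mem_biUnion (sdiff_subset.trans hBE) hx, pairPartner E z,
      hE.pairPartner_mem_biUnion hAE hz, hzy, ?_⟩
    rw [hE.pairPartner_involutive, hE.pairPartner_involutive, hzx]
  next_ne_partner x h := by
    obtain ⟨-, -, z, hz, hzx, hzy⟩ := (exchangeNext_eq_some hE hπ).mp h
    rw [hE.pairPartner_involutive, ← hzx] at hzy
    exact hE.pairPartner_ne hAE hz (hπ (hE.pairPartner_mem_biUnion hAE hz) hz hzy)

end ExchangeWalk

def conflicts (π : α → α) (A W : Finset (Finset α)) : Finset (Finset α) :=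
  A.filter fun a => ∃ z ∈ a, π z ∈ W.biUnion id

lemma conflicts_subset {π : α → α} {A W : Finset (Finset α)} : conflicts π A W ⊆ A :=
  filter_subset _ _

def slots (π : α → α) (P a : Finset α) : Finset α := P.filter fun u => ∃ z ∈ a, π z = u

theorem Matroid.IsExchangeBijOn.feasibleSet_sdiff_conflicts_union {M : Matroid α} {π : α → α}
    {I J : Set α} {A W : Finset (Finset α)} (hπ : M.IsExchangeBijOn π I J)
    (hAI : ↑(A.biUnion id) ⊆ I) (hWJ : ↑(W.biUnion id) ⊆ J) :
    FeasibleSet M ((A \ conflicts π A W) ∪ W) := by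
  refine (hπ.2 {z ∈ I | π z ∈ W.biUnion id} (Set.sep_subset _ _)).indep.subset fun z hz => ?_
  obtain ⟨e, he, hze⟩ := mem_biUnion.mp (mem_coe.mp hz)
  rcases mem_union.mp he with heA | heW
  · obtain ⟨heA, hec⟩ := mem_sdiff.mp heA
    exact Or.inr ⟨hAI (mem_biUnion.mpr ⟨e, heA, hze⟩),
      fun hzK => hec (mem_filter.mpr ⟨heA, z, hze, hzK.2⟩)⟩
  · have hzW : z ∈ W.biUnion id := mem_biUnion.mpr ⟨e, heW, hze⟩
    obtain ⟨v, hv, rfl⟩ := hπ.1.surjOn (hWJ hzW)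
    exact Or.inl ⟨v, ⟨hv, hzW⟩, rfl⟩

lemma card_slots_le {S P : Finset α} {E : Finset (Finset α)} {π : α → α} {a : Finset α}
    (hE : IsPairPartition S E) (ha : a ∈ E) : (slots π P a).card ≤ 2 := by
  refine (card_le_card fun u hu => ?_).trans ((card_image_le (f := π)).trans (hE.1 a ha).le)
  obtain ⟨-, z, hz, rfl⟩ := mem_filter.mp hu
  exact mem_image_of_mem π hz

lemma conflicts_subset_sdiff {S : Finset α} {E A B W : Finset (Finset α)} {π : α → α}
    {I J : Set α} (hE : IsPairPartition S E) (hAE : A ⊆ E) (hBE : B ⊆ E)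
    (hfix : ∀ z ∈ I ∩ J, π z = z) (hAI : ↑(A.biUnion id) ⊆ I) (hBJ : ↑(B.biUnion id) ⊆ J)
    (hW : W ⊆ B \ A) : conflicts π A W ⊆ A \ B := by
  intro a ha
  obtain ⟨haA, z, hza, hπz⟩ := mem_filter.mp ha
  refine mem_sdiff.mpr ⟨haA, fun haB => ?_⟩
  have hz : π z = z := hfix z ⟨hAI (mem_biUnion.mpr ⟨a, haA, hza⟩),
    hBJ (mem_biUnion.mpr ⟨a, haB, hza⟩)⟩
  obtain ⟨b, hb, hzb⟩ := mem_biUnion.mp hπz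
  obtain ⟨hbB, hbA⟩ := mem_sdiff.mp (hW hb)
  rw [hz] at hzb
  exact hbA (hE.eq_of_mem (hAE haA) (hBE hbB) hza hzb ▸ haA)

section ExchangeMoves

variable {S : Finset α} {E A B : Finset (Finset α)} {π : α → α} {a : Finset α} {x u v : α} {k : ℕ}
  (hE : IsPairPartition S E) (hAE : A ⊆ E) (hBE : B ⊆ E) (hπ : Set.InjOn π ↑(A.biUnion id))

local notation "𝒲" => exchangeWalk hE hAE hBE hπ

lemma exchangeWalk_pairs_subset (hx : x ∈ (𝒲).ports) : (𝒲).pairs ((𝒲).window x k) ⊆ B \ A := by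
  intro b hb
  obtain ⟨u, hu, rfl⟩ := mem_image.mp hb
  obtain ⟨b, hb, hub⟩ := mem_biUnion.mp ((𝒲).window_subset_ports hx hu)
  change ({u, pairPartner E u} : Finset α) ∈ B \ A
  rwa [← hE.eq_pair (hBE (mem_sdiff.mp hb).1) hub]

lemma exists_slot_of_mem_conflicts (hx : x ∈ (𝒲).ports)
    (ha : a ∈ conflicts π A ((𝒲).pairs ((𝒲).window x k))) :
    ∃ u ∈ slots π (𝒲).ports a, u ∈ (𝒲).window x k ∨ x = (𝒲).partner u := by
  obtain ⟨haA, z, hza, hπz⟩ := mem_filter.mp ha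
  obtain ⟨b, hb, hzb⟩ := mem_biUnion.mp hπz
  obtain ⟨v, hv, rfl⟩ := mem_image.mp hb
  obtain ⟨i, hik, hi⟩ := (𝒲).mem_window.mp hv
  have hvP : v ∈ (𝒲).ports := (𝒲).mem_ports_of_iter hx hi
  have hzA : z ∈ A.biUnion id := mem_biUnion.mpr ⟨a, haA, hza⟩
  rcases mem_insert.mp hzb with h | h
  · exact ⟨v, mem_filter.mpr ⟨hvP, z, hza, h⟩, Or.inl hv⟩
  rw [mem_singleton] at h
  cases i with
  | zero =>
    obtain rfl : x = v := Option.some_injective _ hi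
    exact ⟨(𝒲).partner x, mem_filter.mpr ⟨(𝒲).partner_mem x hvP, z, hza, h⟩,
      Or.inr ((𝒲).partner_involutive x).symm⟩
  | succ j =>
    obtain ⟨y, hy, hyv⟩ := (𝒲).iter_succ_eq_some.mp hi
    obtain ⟨hyP, -, z', hz', hz'y, hz'v⟩ := (exchangeNext_eq_some hE hπ).mp hyv
    have hzz : pairPartner E z' = z :=
      hπ (hE.pairPartner_mem_biUnion hAE hz') hzA (hz'v.trans h.symm)
    refine ⟨y, mem_filter.mpr ⟨hyP, pairPartner E z,
      (hE.mem_iff (hAE haA) hza).mpr (Or.inr rfl), ?_⟩,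
      Or.inl ((𝒲).mem_window.mpr ⟨j, by omega, hy⟩)⟩
    rw [← hzz, hE.pairPartner_involutive, hz'y]

lemma card_conflicts_le (hx : x ∈ (𝒲).ports) :
    (conflicts π A ((𝒲).pairs ((𝒲).window x k))).card ≤ k + 1 := by
  have hsub : conflicts π A ((𝒲).pairs ((𝒲).window x k)) ⊆
      (insert ((𝒲).partner x) ((𝒲).window x k)).biUnion
        fun u => A.filter fun a => ∃ z ∈ a, π z = u := by
    intro a ha
    obtain ⟨u, hu, h⟩ := exists_slot_of_mem_conflicts hE hAE hBE hπ hx ha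
    obtain ⟨-, z, hza, hzu⟩ := mem_filter.mp hu
    refine mem_biUnion.mpr ⟨u, ?_, mem_filter.mpr ⟨(mem_filter.mp ha).1, z, hza, hzu⟩⟩
    rcases h with h | rfl
    · exact mem_insert_of_mem h
    · rw [(𝒲).partner_involutive]
      exact mem_insert_self _ _
  have hfibre : ∀ u, (A.filter fun a => ∃ z ∈ a, π z = u).card ≤ 1 := fun u =>
    card_le_one.mpr fun a ha a' ha' => by
      obtain ⟨haA, z, hza, rfl⟩ := mem_filter.mp ha
      obtain ⟨ha'A, z', hza', hzz⟩ := mem_filter.mp ha'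
      rw [hπ (mem_biUnion.mpr ⟨a', ha'A, hza'⟩) (mem_biUnion.mpr ⟨a, haA, hza⟩) hzz] at hza'
      exact hE.eq_of_mem (hAE haA) (hAE ha'A) hza hza'
  calc _ ≤ _ := card_le_card hsub
    _ ≤ ∑ u ∈ insert ((𝒲).partner x) ((𝒲).window x k), 1 :=
        card_biUnion_le.trans (sum_le_sum fun u _ => hfibre u)
    _ ≤ k + 1 := by
        rw [sum_const, smul_eq_mul, mul_one]
        exact (card_insert_le _ _).trans (Nat.add_le_add_right (𝒲).card_window_le 1)

lemma exchangeWalk_next_eq_partner (ha : a ∈ A) (hu : u ∈ slots π (𝒲).ports a)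
    (hv : v ∈ slots π (𝒲).ports a) (huv : u ≠ v) : (𝒲).next u = some ((𝒲).partner v) := by
  obtain ⟨huP, zu, hzu, rfl⟩ := mem_filter.mp hu
  obtain ⟨hvP, zv, hzv, rfl⟩ := mem_filter.mp hv
  have hzv' : zv = pairPartner E zu :=
    ((hE.mem_iff (hAE ha) hzu).mp hzv).resolve_left fun h => huv (h ▸ rfl)
  refine (exchangeNext_eq_some hE hπ).mpr ⟨huP, (𝒲).partner_mem _ hvP, zu,
    mem_biUnion.mpr ⟨a, ha, hzu⟩, rfl, ?_⟩
  change π (pairPartner E zu) = pairPartner E (pairPartner E (π zv))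
  rw [hE.pairPartner_involutive, hzv']

theorem isMove_conflicts_pairs_window {M : Matroid α} {I J : Set α} {t : ℕ}
    (hex : M.IsExchangeBijOn π I J) (hAI : ↑(A.biUnion id) ⊆ I) (hBJ : ↑(B.biUnion id) ⊆ J)
    (hx : x ∈ (𝒲).ports) (hk : k ≤ t) :
    IsMove M E A (2 * t + 1) (conflicts π A ((𝒲).pairs ((𝒲).window x k)))
      ((𝒲).pairs ((𝒲).window x k)) := by
  have hMB := exchangeWalk_pairs_subset hE hAE hBE hπ (k := k) hx
  refine ⟨conflicts_subset, fun b hb => ?_, ?_, ?_⟩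
  · exact mem_sdiff.mpr ⟨hBE (mem_sdiff.mp (hMB hb)).1, (mem_sdiff.mp (hMB hb)).2⟩
  · have hA := card_conflicts_le hE hAE hBE hπ (k := k) hx
    have hB : ((𝒲).pairs ((𝒲).window x k)).card ≤ k := card_image_le.trans (𝒲).card_window_le
    omega
  · rw [symmDiff_union_eq_sdiff_union conflicts_subset
      (disjoint_right.mpr fun b hb => (mem_sdiff.mp (hMB hb)).2)]
    refine hex.feasibleSet_sdiff_conflicts_union hAI fun z hz => hBJ ?_
    obtain ⟨b, hb, hzb⟩ := mem_biUnion.mp (mem_coe.mp hz)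
    exact mem_biUnion.mpr ⟨b, (mem_sdiff.mp (hMB hb)).1, hzb⟩

lemma exchangeWalk_sum_weight_pair_mem {t : ℕ} {b : Finset α} (hb : b ∈ B \ A) :
    ∑ i ∈ (𝒲).moves t, (if b ∈ (𝒲).pairs ((𝒲).window i.1 i.2) then (𝒲).weight t i else 0) =
      2 * t := by
  have hbE : b ∈ E := hBE (mem_sdiff.mp hb).1
  obtain ⟨p, hp⟩ := card_pos.mp (by rw [hE.1 b hbE]; norm_num : 0 < b.card)
  rw [hE.eq_pair hbE hp]
  exact (𝒲).sum_weight_pair_mem (mem_biUnion.mpr ⟨b, hb, hp⟩)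

lemma exchangeWalk_sum_weight_conflicts_le {t : ℕ} (ha : a ∈ A) :
    ∑ i ∈ (𝒲).moves t, (if a ∈ conflicts π A ((𝒲).pairs ((𝒲).window i.1 i.2))
      then (𝒲).weight t i else 0) ≤ 2 * t + 2 := by
  refine le_trans (sum_le_sum fun i hi => ?_) ((𝒲).sum_weight_slots_le (filter_subset _ _)
    (card_slots_le hE (hAE ha)) fun u hu v hv huv =>
      exchangeWalk_next_eq_partner hE hAE hBE hπ ha hu hv huv)
  split_ifs with h h'
  · exact le_rfl
  · exact absurd (exists_slot_of_mem_conflicts hE hAE hBE hπ (mem_product.mp hi).1 h) h'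
  · exact (𝒲).weight_nonneg i
  · exact le_rfl

end ExchangeMoves

theorem two_mul_sum_sdiff_sub_le {M : Matroid α} {S : Finset α} {E A B : Finset (Finset α)}
    {π : α → α} {I J : Set α} {w : Finset α → ℝ} {t : ℕ} {δ : ℝ}
    (hE : IsPairPartition S E) (hAE : A ⊆ E) (hBE : B ⊆ E) (hw : ∀ e ∈ E, 0 ≤ w e)
    (hπ : M.IsExchangeBijOn π I J) (hfix : ∀ z ∈ I ∩ J, π z = z)
    (hAI : ↑(A.biUnion id) ⊆ I) (hBJ : ↑(B.biUnion id) ⊆ J) (hδ : 0 ≤ δ)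
    (hloc : ∀ Abar Bbar, IsMove M E A (2 * t + 1) Abar Bbar →
      ∑ e ∈ Bbar, w e - ∑ e ∈ Abar, w e < δ) :
    2 * t * ∑ e ∈ B \ A, w e - (2 * t + 2) * ∑ e ∈ A \ B, w e ≤ 2 * t * (B \ A).card * δ := by
  have hinj : Set.InjOn π ↑(A.biUnion id) := hπ.1.injOn.mono hAI
  set W := exchangeWalk hE hAE hBE hinj
  have hx : ∀ i ∈ W.moves t, i.1 ∈ W.ports := fun i hi => (mem_product.mp hi).1
  have hk : ∀ i ∈ W.moves t, i.2 ≤ t := fun i hi => (mem_Icc.mp (mem_product.mp hi).2).2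
  have hMB : ∀ i ∈ W.moves t, W.pairs (W.window i.1 i.2) ⊆ B \ A := fun i hi =>
    exchangeWalk_pairs_subset hE hAE hBE hinj (hx i hi)
  have hmass : ∑ i ∈ W.moves t, W.weight t i ≤ 2 * t * (B \ A).card := by
    have hports : (W.ports.card : ℝ) ≤ 2 * (B \ A).card := by
      have := card_biUnion_le.trans (sum_le_sum fun b (hb : b ∈ B \ A) =>
        (hE.1 b (hBE (mem_sdiff.mp hb).1)).le)
      rw [sum_const, smul_eq_mul, mul_comm] at this
      exact_mod_cast this
    nlinarith [W.sum_moves_weight_le (t := t), (Nat.cast_nonneg t : (0 : ℝ) ≤ t)]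
  refine (sub_le_sum_mul_of_cover (fun i _ => W.weight_nonneg i)
    (fun i hi => conflicts_subset_sdiff hE hAE hBE hfix hAI hBJ (hMB i hi)) hMB
    (fun a ha => hw a (hAE (mem_sdiff.mp ha).1)) (fun b hb => hw b (hBE (mem_sdiff.mp hb).1))
    (fun i hi => (hloc _ _ (isMove_conflicts_pairs_window hE hAE hBE hinj hπ hAI hBJ
      (hx i hi) (hk i hi))).le)
    (fun a ha => exchangeWalk_sum_weight_conflicts_le hE hAE hBE hinj (mem_sdiff.mp ha).1)
    (fun b hb => (exchangeWalk_sum_weight_pair_mem hE hAE hBE hinj hb).ge)).trans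
    (mul_le_mul_of_nonneg_right hmass hδ)

theorem weighted_parity_delta_local_opt_general
    (M : Matroid α) (S : Finset α) (hground : M.E = ↑S)
    (hsbo : M.StronglyBaseOrderable)
    (E : Finset (Finset α)) (hE : IsPairPartition S E)
    (n : ℕ) (hn : E.card = n)
    (w : Finset α → ℝ) (hw : ∀ e ∈ E, 0 ≤ w e)
    (t : ℕ) (ht : 1 ≤ t) (htn : t ≤ n)
    (B : Finset (Finset α)) (hBE : B ⊆ E) (hB : FeasibleSet M B)
    (A : Finset (Finset α)) (hAE : A ⊆ E) (hA : FeasibleSet M A)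
    (hAloc : ∀ Abar Bbar, IsMove M E A (2 * t + 1) Abar Bbar →
      ∑ e ∈ Bbar, w e - ∑ e ∈ Abar, w e < (1 / (n : ℝ) ^ 2) * ∑ e ∈ A, w e) :
    (1 - 2 / (t + 2 : ℝ)) * ∑ e ∈ B, w e ≤ ∑ e ∈ A, w e := by
  obtain ⟨I, hI, hAI⟩ := hA.exists_isBase_superset
  obtain ⟨J, hJ, hBJ⟩ := hB.exists_isBase_superset
  have hfin : (I ∩ J).Finite :=
    S.finite_toSet.subset (Set.inter_subset_left.trans (hground ▸ hI.subset_ground))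
  obtain ⟨π, hπ, hfix⟩ := hsbo.exists_isExchangeBijOn_fix_inter hI hJ hfin
  have hwA : 0 ≤ ∑ e ∈ A, w e := sum_nonneg fun e he => hw e (hAE he)
  have hkey := two_mul_sum_sdiff_sub_le hE hAE hBE hw hπ hfix hAI hBJ (by positivity) hAloc
  refine one_sub_two_div_mul_sum_le (fun e he => hw e (hAE he)) (Nat.cast_nonneg t)
    (hkey.trans ?_)
  have hnpos : (0 : ℝ) < n := by exact_mod_cast (ht.trans htn : 1 ≤ n)
  have hBA : ((B \ A).card : ℝ) ≤ n := by
    exact_mod_cast hn ▸ card_le_card (sdiff_subset.trans hBE)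
  have htn' : (t : ℝ) ≤ n := by exact_mod_cast htn
  calc 2 * t * (B \ A).card * (1 / (n : ℝ) ^ 2 * ∑ e ∈ A, w e)
      ≤ 2 * n * n * (1 / (n : ℝ) ^ 2 * ∑ e ∈ A, w e) := by gcongr
    _ = 2 * ∑ e ∈ A, w e := by field_simp

theorem weighted_parity_delta_local_opt
    (M : Matroid α) (S : Finset α) (hground : M.E = ↑S)
    (hsbo : M.StronglyBaseOrderable)
    (E : Finset (Finset α)) (hE : IsPairPartition S E)
    (n : ℕ) (hn : E.card = n)
    (w : Finset α → ℝ) (hw : ∀ e ∈ E, 0 ≤ w e)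
    (t : ℕ) (ht : 1 ≤ t) (htn : t ≤ n)
    (B : Finset (Finset α)) (hBE : B ⊆ E) (hB : FeasibleSet M B)
    (hBmax : ∀ B' ⊆ E, FeasibleSet M B' → ∑ e ∈ B', w e ≤ ∑ e ∈ B, w e)
    (A : Finset (Finset α)) (hAE : A ⊆ E) (hA : FeasibleSet M A)
    (hAloc : ∀ Abar Bbar, IsMove M E A (2 * t + 1) Abar Bbar →
      ∑ e ∈ Bbar, w e - ∑ e ∈ Abar, w e < (1 / (n : ℝ) ^ 2) * ∑ e ∈ A, w e) :
    (1 - 2 / (t + 2 : ℝ)) * ∑ e ∈ B, w e ≤ ∑ e ∈ A, w e :=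
  weighted_parity_delta_local_opt_general M S hground hsbo E hE n hn w hw t ht htn B hBE hB A hAE hA
    hAloc
end

section
/- Let M be a strongly base orderable matroid on a finite ground set S, let E be a partition of S into n pairs, and let w : E → ℝ≥0 be a weight function. Let 0 < ε < 1 and set t = ⌈1/ε⌉, and assume t ≤ n. If B ⊆ E is a maximum-weight feasible set of pairs and A ⊆ E is a feasible set of pairs that is a local optimum for (2t+1)-moves, then w(B) ≤ (1 + ε)·w(A). -/
/-!
Extend `⋃ A` and `⋃ B` to bases `I` and `J` and take an exchange bijection `π : I → J`; composing
it with transpositions makes it fix `I ∩ J`. Join `b ∈ B \ A` to `a ∈ A \ B` when `π` maps a point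
of `a` into `b`. Since pairs have two elements, this bipartite exchange graph has maximum degree
two, and trading a set `T ⊆ B \ A` for the set `Z` of all its neighbours is feasible, so local
optimality gives `w T ≤ w Z` whenever `|T| + |Z| ≤ 2t + 1`. The components are paths and even
cycles; averaging over the windows of `2t + 1` consecutive vertices gives
`t · w(B \ A) ≤ (t + 1) · w(A \ B)`, and `1 / t ≤ ε` finishes.
-/

open Finset

variable {α : Type*} [DecidableEq α]

lemma eq_or_eq_or_eq_of_card_le_two {β : Type*} {s : Finset β} (hs : #s ≤ 2) {a b c : β}
    (ha : a ∈ s) (hb : b ∈ s) (hc : c ∈ s) : a = b ∨ a = c ∨ b = c := by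
  by_contra! h
  have := two_lt_card.2 ⟨a, ha, b, hb, c, hc, h.1, h.2.1, h.2.2⟩
  omega

lemma symmDiff_union_eq_sdiff_union_s2 {β : Type*} [DecidableEq β] {A Z T : Finset β} (hZ : Z ⊆ A)
    (hT : Disjoint T A) : symmDiff A (Z ∪ T) = A \ Z ∪ T := by
  ext e
  have := @hZ e
  have := fun h : e ∈ T => Finset.disjoint_left.1 hT h
  simp only [mem_symmDiff, mem_union, mem_sdiff]
  tauto

lemma card_le_of_injOn_half {ι : Type*} {A : Finset ι} {φ : ι → ℕ} {r m : ℕ}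
    (hφ : Set.InjOn φ A) (h : ∀ a ∈ A, φ a % 2 = r ∧ φ a / 2 < m) : #A ≤ m := by
  calc #A ≤ #(range m) := by
        refine card_le_card_of_injOn (φ · / 2) (fun a ha => by simpa using (h a ha).2) ?_
        intro a ha b hb hab
        have := h a ha
        have := h b hb
        exact hφ ha hb (by simp only at hab; omega)
    _ = m := card_range m

lemma mul_sum_le_mul_sum_of_cover {ι κ : Type*} {S : Finset κ} {P Q : Finset ι}
    {W : κ → ι → Prop} [∀ s i, Decidable (W s i)] {g : ι → ℝ} {a b : ℝ}
    (hgP : ∀ i ∈ P, 0 ≤ g i) (hgQ : ∀ j ∈ Q, 0 ≤ g j)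
    (hP : ∀ i ∈ P, a ≤ #{s ∈ S | W s i}) (hQ : ∀ j ∈ Q, (#{s ∈ S | W s j} : ℝ) ≤ b)
    (hS : ∀ s ∈ S, ∑ i ∈ P with W s i, g i ≤ ∑ j ∈ Q with W s j, g j) :
    a * ∑ i ∈ P, g i ≤ b * ∑ j ∈ Q, g j := by
  have hcount (R : Finset ι) :
      ∑ s ∈ S, ∑ i ∈ R with W s i, g i = ∑ i ∈ R, #{s ∈ S | W s i} * g i := by
    rw [sum_comm' (t' := R) (s' := fun i => {s ∈ S | W s i}) (by simp only [mem_filter]; tauto)]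
    simp
  calc a * ∑ i ∈ P, g i ≤ ∑ i ∈ P, #{s ∈ S | W s i} * g i := by
        rw [mul_sum]
        exact sum_le_sum fun i hi => mul_le_mul_of_nonneg_right (hP i hi) (hgP i hi)
    _ ≤ ∑ j ∈ Q, #{s ∈ S | W s j} * g j := by
        rw [← hcount, ← hcount]
        exact sum_le_sum hS
    _ ≤ b * ∑ j ∈ Q, g j := by
        rw [mul_sum]
        exact sum_le_sum fun j hj => mul_le_mul_of_nonneg_right (hQ j hj) (hgQ j hj)

/-- `(s - i) mod N` for `i, s < N`, written without `%` so that `omega` can reason about it. -/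
def cycDist (N s i : ℕ) : ℕ := if i ≤ s then s - i else s + N - i

def CyclicAdj (L i j : ℕ) : Prop :=
  i + 1 = j ∨ j + 1 = i ∨ (i + 1 = L ∧ j = 0) ∨ (j + 1 = L ∧ i = 0)

section CyclicWindows

variable {N L t p s : ℕ}

lemma card_window_add_le (hN : N % 2 = 0) (hLN : L ≤ N) (hsp : (s + p) % 2 = 0)
    {r : ℕ} (hr : r < 2) :
    #{i ∈ {i ∈ range L | (i + p) % 2 = r} | cycDist N s i ≤ 2 * t} + r ≤ t + 1 := by
  suffices #{i ∈ {i ∈ range L | (i + p) % 2 = r} | cycDist N s i ≤ 2 * t} ≤ t + 1 - r by omega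
  refine card_le_of_injOn_half (φ := cycDist N s) (r := r) ?_ fun i hi => ?_
  · intro i hi i' hi' h
    simp only [mem_coe, mem_filter, mem_range] at hi hi'
    unfold cycDist at h
    split_ifs at h <;> omega
  · simp only [mem_filter, mem_range] at hi
    unfold cycDist at hi ⊢
    split_ifs at hi ⊢ <;> omega

lemma card_windows_le (hN : N % 2 = 0) (hLN : L ≤ N) {j : ℕ} (hj : j < L)
    (hjp : (j + p) % 2 = 0) :
    #{s ∈ {s ∈ range N | (s + p) % 2 = 0} | cycDist N s j ≤ 2 * t} ≤ t + 1 := by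
  refine card_le_of_injOn_half (φ := (cycDist N · j)) (r := 0) ?_ fun s hs => ?_
  · intro s hs s' hs' h
    simp only [mem_coe, mem_filter, mem_range] at hs hs'
    simp only [cycDist] at h
    split_ifs at h <;> omega
  · simp only [mem_filter, mem_range] at hs
    unfold cycDist at hs ⊢
    split_ifs at hs ⊢ <;> omega

lemma le_card_windows (hN : N % 2 = 0) (htN : 2 * t ≤ N) {i : ℕ} (hi : i < N)
    (hip : (i + p) % 2 = 1) :
    t ≤ #{s ∈ {s ∈ range N | (s + p) % 2 = 0} | cycDist N s i ≤ 2 * t} := by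
  calc t = #(range t) := (card_range t).symm
    _ ≤ _ := by
      refine card_le_card_of_injOn
        (fun k => if i + 2 * k + 1 < N then i + 2 * k + 1 else i + 2 * k + 1 - N) ?_ ?_
      · intro k hk
        simp only [mem_coe, mem_filter, mem_range] at hk ⊢
        unfold cycDist
        split_ifs <;> omega
      · intro k hk k' hk' h
        simp only [mem_coe, mem_range] at hk hk' h
        split_ifs at h <;> omega

lemma cycDist_le_of_cyclicAdj (hN : N = L + L % 2) (hs : s < N) (hsp : (s + p) % 2 = 0)
    {i j : ℕ} (hi : i < L) (hip : (i + p) % 2 = 1) (hjp : (j + p) % 2 = 0)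
    (hij : CyclicAdj L i j) (hsi : cycDist N s i ≤ 2 * t) : cycDist N s j ≤ 2 * t := by
  unfold cycDist CyclicAdj at *
  split_ifs at * <;> omega

end CyclicWindows

/-- A long path or cycle `0, …, L - 1` is covered by the windows of `2t + 1` cyclically consecutive
indices ending at an index of parity `p`, taken modulo `L` rounded up to an even number. Each window
is a closed move, every odd index lies in `t` windows and every even index in `t + 1`. -/
lemma mul_sum_odd_le_succ_mul_sum_even (t L p : ℕ) (g : ℕ → ℝ) (hg : ∀ i < L, 0 ≤ g i)
    (hmove : ∀ U V : Finset ℕ, U ⊆ {i ∈ range L | (i + p) % 2 = 1} →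
      V ⊆ {j ∈ range L | (j + p) % 2 = 0} →
      (∀ i ∈ U, ∀ j < L, (j + p) % 2 = 0 → CyclicAdj L i j → j ∈ V) →
      #U + #V ≤ 2 * t + 1 → ∑ i ∈ U, g i ≤ ∑ j ∈ V, g j) :
    t * ∑ i ∈ range L with (i + p) % 2 = 1, g i ≤
      (t + 1) * ∑ j ∈ range L with (j + p) % 2 = 0, g j := by
  have hg' (r : ℕ) : ∀ i ∈ {i ∈ range L | (i + p) % 2 = r}, 0 ≤ g i := fun i hi =>
    hg i (mem_range.1 (mem_filter.1 hi).1)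
  by_cases hL : L ≤ 2 * t + 1
  · have hcard : #{i ∈ range L | (i + p) % 2 = 1} + #{j ∈ range L | (j + p) % 2 = 0} = L := by
      rw [filter_congr (q := fun i => ¬(i + p) % 2 = 0) fun i _ => by omega, add_comm,
        card_filter_add_card_filter_not, card_range]
    have := hmove _ _ subset_rfl subset_rfl (fun i _ j hj hjp _ => by simp [hj, hjp]) (by omega)
    have := sum_nonneg (hg' 0)
    have ht : (0 : ℝ) ≤ t := t.cast_nonneg
    nlinarith
  have hN : (L + L % 2) % 2 = 0 := by omega
  refine mul_sum_le_mul_sum_of_cover (S := {s ∈ range (L + L % 2) | (s + p) % 2 = 0})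
    (W := fun s i => cycDist (L + L % 2) s i ≤ 2 * t) (hg' 1) (hg' 0) ?_ ?_ ?_
  · intro i hi
    simp only [mem_filter, mem_range] at hi
    exact_mod_cast le_card_windows (t := t) hN (by omega) (by omega) hi.2
  · intro j hj
    simp only [mem_filter, mem_range] at hj
    exact_mod_cast card_windows_le (t := t) hN (by omega) hj.1 hj.2
  · intro s hs
    simp only [mem_filter, mem_range] at hs
    refine hmove _ _ (filter_subset _ _) (filter_subset _ _) (fun i hi j hj hjp hij => ?_) ?_
    · simp only [mem_filter, mem_range] at hi ⊢
      exact ⟨⟨hj, hjp⟩, cycDist_le_of_cyclicAdj rfl hs.1 hs.2 hi.1.1 hi.1.2 hjp hij hi.2⟩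
    · have := card_window_add_le (L := L) (t := t) hN (by omega) hs.2 (r := 1) (by omega)
      have := card_window_add_le (L := L) (t := t) hN (by omega) hs.2 (r := 0) (by omega)
      omega

namespace SimpleGraph

variable {γ : Type*}

def IsPathSeq (G : SimpleGraph γ) (V : Finset γ) (f : ℕ → γ) (L : ℕ) : Prop :=
  (∀ i < L, f i ∈ V) ∧ (∀ i < L, ∀ j < L, f i = f j → i = j) ∧
    ∀ i, i + 1 < L → G.Adj (f i) (f (i + 1))

section Paths

variable {G : SimpleGraph γ} {V : Finset γ} {f : ℕ → γ} {L : ℕ}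

lemma IsPathSeq.length_le (hf : G.IsPathSeq V f L) : L ≤ #V := by
  calc L = #(range L) := (card_range L).symm
    _ ≤ #V := card_le_card_of_injOn f (fun i hi => hf.1 i (by simpa using hi))
        fun i hi j hj h => hf.2.1 i (by simpa using hi) j (by simpa using hj) h

lemma IsPathSeq.reverse (hf : G.IsPathSeq V f L) :
    G.IsPathSeq V (fun i => f (L - 1 - i)) L := by
  refine ⟨fun i hi => hf.1 _ (by omega), fun i hi j hj h => ?_, fun i hi => ?_⟩
  · have := hf.2.1 _ (by omega) _ (by omega) h
    omega
  · have := hf.2.2 (L - 1 - (i + 1)) (by omega)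
    rw [show L - 1 - (i + 1) + 1 = L - 1 - i by omega] at this
    exact this.symm

lemma IsPathSeq.snoc [DecidableEq γ] (hf : G.IsPathSeq V f L) (hL : 0 < L) {v : γ} (hv : v ∈ V)
    (hnew : ∀ i < L, f i ≠ v) (hadj : G.Adj (f (L - 1)) v) :
    G.IsPathSeq V (Function.update f L v) (L + 1) := by
  have hupd : ∀ i < L, Function.update f L v i = f i := fun i hi =>
    Function.update_of_ne (by omega) _ _
  refine ⟨fun i hi => ?_, fun i hi j hj h => ?_, fun i hi => ?_⟩
  · by_cases hiL : i = L
    · rw [hiL, Function.update_self]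
      exact hv
    · rw [hupd i (by omega)]
      exact hf.1 i (by omega)
  · by_cases hiL : i = L <;> by_cases hjL : j = L
    · omega
    · rw [hiL, Function.update_self, hupd j (by omega)] at h
      exact absurd h.symm (hnew j (by omega))
    · rw [hjL, Function.update_self, hupd i (by omega)] at h
      exact absurd h (hnew i (by omega))
    · rw [hupd i (by omega), hupd j (by omega)] at h
      exact hf.2.1 i (by omega) j (by omega) h
  · by_cases hiL : i + 1 = L
    · rw [hiL, Function.update_self, hupd i (by omega), show i = L - 1 by omega]
      exact hadj
    · rw [hupd i (by omega), hupd (i + 1) (by omega)]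
      exact hf.2.2 i (by omega)

lemma exists_maximal_isPathSeq (hV : V.Nonempty) :
    ∃ f L, 0 < L ∧ G.IsPathSeq V f L ∧ ∀ f', ¬ G.IsPathSeq V f' (L + 1) := by
  classical
  obtain ⟨v, hv⟩ := hV
  have h1 : ∃ f, G.IsPathSeq V f 1 :=
    ⟨fun _ => v, fun _ _ => hv, fun i hi j hj _ => by omega, fun i hi => by omega⟩
  have hcard : 1 ≤ #V := card_pos.2 ⟨v, hv⟩
  obtain ⟨f, hf⟩ := Nat.findGreatest_spec (P := fun L => ∃ f, G.IsPathSeq V f L) hcard h1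
  refine ⟨f, _, Nat.le_findGreatest hcard h1, hf, fun f' hf' => ?_⟩
  exact Nat.findGreatest_is_greatest (Nat.lt_succ_self _) hf'.length_le ⟨f', hf'⟩

lemma IsPathSeq.eq_of_adj_interior
    (hdeg : ∀ u ∈ V, ∀ a b c, G.Adj u a → G.Adj u b → G.Adj u c → a = b ∨ a = c ∨ b = c)
    (hf : G.IsPathSeq V f L) {i : ℕ} (hi : 0 < i) (hiL : i + 1 < L) {v : γ}
    (hv : G.Adj (f i) v) : v = f (i - 1) ∨ v = f (i + 1) := by
  have hprev : G.Adj (f i) (f (i - 1)) := by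
    have := hf.2.2 (i - 1) (by omega)
    rw [Nat.sub_add_cancel hi] at this
    exact this.symm
  rcases hdeg _ (hf.1 i (by omega)) _ _ _ hprev (hf.2.2 i hiL) hv with h | h | h
  · have := hf.2.1 _ (by omega) _ hiL h
    omega
  · exact Or.inl h.symm
  · exact Or.inr h.symm

/-- A neighbour of the last vertex of a maximal path lies on the path; as the interior vertices
already have their two neighbours on it, it is the previous vertex or the first one. -/
lemma IsPathSeq.exists_of_adj_last
    (hdeg : ∀ u ∈ V, ∀ a b c, G.Adj u a → G.Adj u b → G.Adj u c → a = b ∨ a = c ∨ b = c)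
    (hV : ∀ u ∈ V, ∀ v, G.Adj u v → v ∈ V) (hf : G.IsPathSeq V f L)
    (hmax : ∀ f', ¬ G.IsPathSeq V f' (L + 1)) (hL : 0 < L) {v : γ} (hv : G.Adj (f (L - 1)) v) :
    ∃ j < L, f j = v ∧ CyclicAdj L (L - 1) j := by
  classical
  obtain ⟨j, hj, rfl⟩ : ∃ j < L, f j = v := by
    by_contra! hnew
    exact hmax _ (hf.snoc hL (hV _ (hf.1 _ (by omega)) _ hv) hnew hv)
  refine ⟨j, hj, rfl, ?_⟩
  unfold CyclicAdj
  by_contra! hfar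
  have hjL : j + 1 < L := by
    by_contra
    obtain rfl : j = L - 1 := by omega
    exact hv.ne rfl
  rcases hf.eq_of_adj_interior hdeg (by omega) hjL hv.symm with h | h
  · have := hf.2.1 _ (by omega) _ (by omega) h
    omega
  · have := hf.2.1 _ (by omega) _ (by omega) h
    omega

lemma IsPathSeq.exists_of_adj
    (hdeg : ∀ u ∈ V, ∀ a b c, G.Adj u a → G.Adj u b → G.Adj u c → a = b ∨ a = c ∨ b = c)
    (hV : ∀ u ∈ V, ∀ v, G.Adj u v → v ∈ V) (hf : G.IsPathSeq V f L)
    (hmax : ∀ f', ¬ G.IsPathSeq V f' (L + 1)) {i : ℕ} (hi : i < L) {v : γ}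
    (hv : G.Adj (f i) v) : ∃ j < L, f j = v ∧ CyclicAdj L i j := by
  by_cases hlast : i + 1 = L
  · obtain rfl : i = L - 1 := by omega
    exact hf.exists_of_adj_last hdeg hV hmax (by omega) hv
  by_cases hfirst : i = 0
  · subst hfirst
    obtain ⟨j, hj, rfl, hadj⟩ := hf.reverse.exists_of_adj_last hdeg hV hmax hi
      (by simpa using hv)
    exact ⟨L - 1 - j, by omega, rfl, by unfold CyclicAdj at hadj ⊢; omega⟩
  rcases hf.eq_of_adj_interior hdeg (by omega) (by omega) hv with rfl | rfl
  · exact ⟨i - 1, by omega, rfl, by unfold CyclicAdj; omega⟩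
  · exact ⟨i + 1, by omega, rfl, by unfold CyclicAdj; omega⟩

end Paths

variable [DecidableEq γ] {G : SimpleGraph γ} {X Y : Finset γ} {w : γ → ℝ} {t : ℕ}

lemma IsPathSeq.exists_parity {f : ℕ → γ} {L : ℕ}
    (hf : G.IsPathSeq (X ∪ Y) f L) (hXY : Disjoint X Y)
    (hX : ∀ u ∈ X, ∀ v, G.Adj u v → v ∈ Y) (hY : ∀ u ∈ Y, ∀ v, G.Adj u v → v ∈ X) :
    ∃ p, ∀ i < L, (f i ∈ X ↔ (i + p) % 2 = 1) ∧ (f i ∈ Y ↔ (i + p) % 2 = 0) := by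
  have hXiff : ∀ i < L, f i ∈ X ↔ f i ∉ Y := fun i hi =>
    ⟨fun h h' => Finset.disjoint_left.1 hXY h h',
      fun h => (mem_union.1 (hf.1 i hi)).resolve_right h⟩
  have hstep : ∀ i, i + 1 < L → (f (i + 1) ∈ Y ↔ f i ∉ Y) := fun i hi =>
    ⟨fun h h' => (hXiff _ hi).1 (hY _ h' _ (hf.2.2 i hi)) h,
      fun h => hX _ ((hXiff i (by omega)).2 h) _ (hf.2.2 i hi)⟩
  have hYiff : ∀ i < L, f i ∈ Y ↔ (i + if f 0 ∈ Y then 0 else 1) % 2 = 0 := by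
    intro i hi
    induction i with
    | zero => split_ifs with h <;> simp [h]
    | succ i ih =>
      rw [hstep i hi, ih (by omega)]
      omega
  exact ⟨_, fun i hi => ⟨by rw [hXiff i hi, hYiff i hi]; omega, hYiff i hi⟩⟩
lemma IsPathSeq.index_move_le {f : ℕ → γ} {L p : ℕ} (hf : G.IsPathSeq (X ∪ Y) f L)
    (hp : ∀ i < L, (f i ∈ X ↔ (i + p) % 2 = 1) ∧ (f i ∈ Y ↔ (i + p) % 2 = 0))
    (hcl : ∀ i < L, ∀ v, G.Adj (f i) v → ∃ j < L, f j = v ∧ CyclicAdj L i j)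
    (hX : ∀ u ∈ X, ∀ v, G.Adj u v → v ∈ Y)
    (hmove : ∀ T ⊆ X, ∀ Z ⊆ Y, (∀ b ∈ T, ∀ a, G.Adj b a → a ∈ Z) →
      #T + #Z ≤ 2 * t + 1 → ∑ b ∈ T, w b ≤ ∑ a ∈ Z, w a)
    {U V : Finset ℕ} (hU : U ⊆ {i ∈ range L | (i + p) % 2 = 1})
    (hV : V ⊆ {j ∈ range L | (j + p) % 2 = 0})
    (hUV : ∀ i ∈ U, ∀ j < L, (j + p) % 2 = 0 → CyclicAdj L i j → j ∈ V)
    (hsize : #U + #V ≤ 2 * t + 1) :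
    ∑ i ∈ U, w (f i) ≤ ∑ j ∈ V, w (f j) := by
  have hinj (s : Finset ℕ) (hs : s ⊆ range L) : Set.InjOn f s :=
    fun i hi j hj h => hf.2.1 i (by simpa using hs hi) j (by simpa using hs hj) h
  rw [← sum_image (hinj U (hU.trans (filter_subset _ _))),
    ← sum_image (hinj V (hV.trans (filter_subset _ _)))]
  refine hmove _ (fun b hb => ?_) _ (fun a ha => ?_) (fun b hb a hba => ?_)
    ((add_le_add card_image_le card_image_le).trans hsize)
  · obtain ⟨i, hi, rfl⟩ := mem_image.1 hb
    have := mem_filter.1 (hU hi)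
    exact ((hp i (by simpa using this.1)).1).2 this.2
  · obtain ⟨j, hj, rfl⟩ := mem_image.1 ha
    have := mem_filter.1 (hV hj)
    exact ((hp j (by simpa using this.1)).2).2 this.2
  · obtain ⟨i, hi, rfl⟩ := mem_image.1 hb
    obtain ⟨hiL, hip⟩ := mem_filter.1 (hU hi)
    obtain ⟨j, hj, rfl, hij⟩ := hcl i (by simpa using hiL) a hba
    have hjY : f j ∈ Y := hX _ ((hp i (by simpa using hiL)).1.2 hip) _ hba
    exact mem_image_of_mem f (hUV i hi j hj ((hp j hj).2.1 hjY) hij)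

lemma exists_closed_component_bound (hXY : Disjoint X Y)
    (hX : ∀ u ∈ X, ∀ v, G.Adj u v → v ∈ Y) (hY : ∀ u ∈ Y, ∀ v, G.Adj u v → v ∈ X)
    (hdeg : ∀ u ∈ X ∪ Y, ∀ a b c, G.Adj u a → G.Adj u b → G.Adj u c → a = b ∨ a = c ∨ b = c)
    (hw : ∀ v ∈ X ∪ Y, 0 ≤ w v)
    (hmove : ∀ T ⊆ X, ∀ Z ⊆ Y, (∀ b ∈ T, ∀ a, G.Adj b a → a ∈ Z) →
      #T + #Z ≤ 2 * t + 1 → ∑ b ∈ T, w b ≤ ∑ a ∈ Z, w a)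
    (hne : (X ∪ Y).Nonempty) :
    ∃ C : Finset γ, C.Nonempty ∧ C ⊆ X ∪ Y ∧ (∀ u ∈ C, ∀ v, G.Adj u v → v ∈ C) ∧
      t * ∑ v ∈ X ∩ C, w v ≤ (t + 1) * ∑ v ∈ Y ∩ C, w v := by
  have hV : ∀ u ∈ X ∪ Y, ∀ v, G.Adj u v → v ∈ X ∪ Y := fun u hu v huv =>
    (mem_union.1 hu).elim (fun h => mem_union_right _ (hX u h v huv))
      (fun h => mem_union_left _ (hY u h v huv))
  obtain ⟨f, L, hL, hf, hmax⟩ := exists_maximal_isPathSeq hne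
  have hcl (i) (hi : i < L) (v) (hv : G.Adj (f i) v) := hf.exists_of_adj hdeg hV hmax hi hv
  obtain ⟨p, hp⟩ := hf.exists_parity hXY hX hY
  have himage (Z : Finset γ) (r : ℕ) (hZ : ∀ i < L, f i ∈ Z ↔ (i + p) % 2 = r) :
      ∑ v ∈ Z ∩ (range L).image f, w v = ∑ i ∈ range L with (i + p) % 2 = r, w (f i) := by
    rw [inter_comm, ← filter_mem_eq_inter, filter_image,
      filter_congr fun i hi => hZ i (by simpa using hi), sum_image]
    exact fun i hi j hj h => hf.2.1 i (mem_range.1 (mem_filter.1 hi).1) j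
      (mem_range.1 (mem_filter.1 hj).1) h
  refine ⟨(range L).image f, ⟨f 0, mem_image_of_mem f (by simpa)⟩, ?_, ?_, ?_⟩
  · intro v hv
    obtain ⟨i, hi, rfl⟩ := mem_image.1 hv
    exact hf.1 i (by simpa using hi)
  · intro u hu v huv
    obtain ⟨i, hi, rfl⟩ := mem_image.1 hu
    obtain ⟨j, hj, rfl, -⟩ := hcl i (by simpa using hi) v huv
    exact mem_image_of_mem f (by simpa)
  rw [himage X 1 fun i hi => (hp i hi).1, himage Y 0 fun i hi => (hp i hi).2]
  exact mul_sum_odd_le_succ_mul_sum_even t L p (w ∘ f) (fun i hi => hw _ (hf.1 i hi))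
    fun U V hU hV' hUV hsize => hf.index_move_le hp hcl hX hmove hU hV' hUV hsize

theorem mul_sum_le_succ_mul_sum (hXY : Disjoint X Y)
    (hX : ∀ u ∈ X, ∀ v, G.Adj u v → v ∈ Y) (hY : ∀ u ∈ Y, ∀ v, G.Adj u v → v ∈ X)
    (hdeg : ∀ u ∈ X ∪ Y, ∀ a b c, G.Adj u a → G.Adj u b → G.Adj u c → a = b ∨ a = c ∨ b = c)
    (hw : ∀ v ∈ X ∪ Y, 0 ≤ w v)
    (hmove : ∀ T ⊆ X, ∀ Z ⊆ Y, (∀ b ∈ T, ∀ a, G.Adj b a → a ∈ Z) →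
      #T + #Z ≤ 2 * t + 1 → ∑ b ∈ T, w b ≤ ∑ a ∈ Z, w a) :
    t * ∑ v ∈ X, w v ≤ (t + 1) * ∑ v ∈ Y, w v := by
  induction hn : #(X ∪ Y) using Nat.strong_induction_on generalizing X Y with
  | _ n ih =>
  rcases (X ∪ Y).eq_empty_or_nonempty with h | hne
  · obtain ⟨rfl, rfl⟩ := union_eq_empty.1 h
    simp
  obtain ⟨C, hCne, hCV, hCcl, hC⟩ := exists_closed_component_bound hXY hX hY hdeg hw hmove hne
  have hout (u v : γ) (hu : u ∉ C) (huv : G.Adj u v) : v ∉ C := fun hv => hu (hCcl v hv u huv.symm)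
  have hsub : X \ C ∪ Y \ C ⊆ X ∪ Y := union_subset_union sdiff_subset sdiff_subset
  have hrest := ih _ (hn ▸ card_lt_card (union_sdiff_distrib X Y C ▸ sdiff_ssubset hCV hCne))
    (hXY.mono sdiff_subset sdiff_subset)
    (fun u hu v huv => mem_sdiff.2 ⟨hX u (mem_sdiff.1 hu).1 v huv, hout u v (mem_sdiff.1 hu).2 huv⟩)
    (fun u hu v huv => mem_sdiff.2 ⟨hY u (mem_sdiff.1 hu).1 v huv, hout u v (mem_sdiff.1 hu).2 huv⟩)
    (fun u hu => hdeg u (hsub hu)) (fun v hv => hw v (hsub hv))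
    (fun T hT Z hZ => hmove T (hT.trans sdiff_subset) Z (hZ.trans sdiff_subset)) rfl
  rw [← sum_inter_add_sum_sdiff X C, ← sum_inter_add_sum_sdiff Y C]
  linarith

end SimpleGraph

namespace Matroid

variable {β : Type*}

def IsExchangeBijection (M : Matroid β) (I J : Set β) (π : β → β) : Prop :=
  Set.BijOn π I J ∧ ∀ K ⊆ I, M.IsBase (π '' K ∪ (I \ K))

variable {M : Matroid β} {I J : Set β} {π : β → β}

lemma IsExchangeBijection.comp_swap [DecidableEq β] (h : M.IsExchangeBijection I J π)
    {c y : β} (hc : c ∈ I) (hy : y ∈ I) (hyc : π y = c) :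
    M.IsExchangeBijection I J (π ∘ Equiv.swap c y) := by
  refine ⟨h.1.comp (Equiv.bijOn_swap hc hy), fun K hK => ?_⟩
  rw [Set.image_comp, Equiv.image_eq_preimage_symm, Equiv.symm_swap]
  by_cases hyK : y ∈ K
  · convert h.2 (insert c K) (Set.insert_subset hc hK) using 1
    ext z
    simp only [Set.mem_union, Set.mem_image, Set.mem_preimage, Set.mem_sdiff, Set.mem_insert_iff]
    grind
  · convert h.2 (K \ {c}) (Set.sdiff_subset.trans hK) using 1
    ext z
    simp only [Set.mem_union, Set.mem_image, Set.mem_preimage, Set.mem_sdiff,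
      Set.mem_singleton_iff]
    grind

lemma IsExchangeBijection.exists_fixing (h : M.IsExchangeBijection I J π) (hI : I.Finite) :
    ∃ π', M.IsExchangeBijection I J π' ∧ ∀ x ∈ I ∩ J, π' x = x := by
  classical
  induction hn : {x ∈ I ∩ J | π x ≠ x}.ncard using Nat.strong_induction_on generalizing π with
  | _ n ih =>
  by_cases hfix : ∀ x ∈ I ∩ J, π x = x
  · exact ⟨π, h, hfix⟩
  obtain ⟨c, hcI, hcJ, hπc⟩ : ∃ c ∈ I, c ∈ J ∧ π c ≠ c := by simpa using hfix
  obtain ⟨y, hyI, hyc⟩ := h.1.surjOn hcJ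
  -- `π ∘ swap c y` fixes `c` and every point fixed by `π`
  refine ih _ ?_ (h.comp_swap hcI hyI hyc) rfl
  rw [← hn]
  refine Set.ncard_lt_ncard ((Set.ssubset_iff_of_subset ?_).2 ⟨c, ⟨⟨hcI, hcJ⟩, hπc⟩, ?_⟩)
    (hI.subset fun x hx => hx.1.1)
  · rintro x ⟨hx, hπx⟩
    exact ⟨hx, fun hx' => hπx (by grind)⟩
  · grind

end Matroid

def exchangeGraph (π : α → α) (A B : Finset (Finset α)) : SimpleGraph (Finset α) :=
  SimpleGraph.fromRel fun b a => b ∈ B \ A ∧ a ∈ A \ B ∧ ∃ x ∈ a, π x ∈ b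

section ExchangeGraph

variable {π : α → α} {I : Set α} {E A B : Finset (Finset α)} {a b : Finset α}

lemma exchangeGraph_adj_of_mem_left (hb : b ∈ B \ A) :
    (exchangeGraph π A B).Adj b a ↔ a ∈ A \ B ∧ ∃ x ∈ a, π x ∈ b := by
  simp only [exchangeGraph, SimpleGraph.fromRel_adj, mem_sdiff] at hb ⊢
  grind

lemma exchangeGraph_adj_of_mem_right (ha : a ∈ A \ B) :
    (exchangeGraph π A B).Adj a b ↔ b ∈ B \ A ∧ ∃ x ∈ a, π x ∈ b := by
  simp only [exchangeGraph, SimpleGraph.fromRel_adj, mem_sdiff] at ha ⊢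
  grind

lemma exchangeGraph_eq_or_eq_or_eq_of_adj (hinj : Set.InjOn π I) (hAI : ↑(A.biUnion id) ⊆ I)
    (hcard : ∀ e ∈ E, #e = 2) (hdisj : (E : Set (Finset α)).PairwiseDisjoint id)
    (hAE : A ⊆ E) (hBE : B ⊆ E) :
    ∀ u ∈ B \ A ∪ A \ B, ∀ a b c, (exchangeGraph π A B).Adj u a →
      (exchangeGraph π A B).Adj u b → (exchangeGraph π A B).Adj u c → a = b ∨ a = c ∨ b = c := by
  have hI {a x} (ha : a ∈ A \ B) (hx : x ∈ a) : x ∈ I :=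
    hAI (mem_coe.2 (mem_biUnion.2 ⟨a, (mem_sdiff.1 ha).1, hx⟩))
  intro u hu a₁ a₂ a₃ h₁ h₂ h₃
  rcases mem_union.1 hu with hu | hu
  · rw [exchangeGraph_adj_of_mem_left hu] at h₁ h₂ h₃
    obtain ⟨ha₁, x₁, hx₁, hπ₁⟩ := h₁
    obtain ⟨ha₂, x₂, hx₂, hπ₂⟩ := h₂
    obtain ⟨ha₃, x₃, hx₃, hπ₃⟩ := h₃
    have key {a a' x x'} (ha : a ∈ A \ B) (ha' : a' ∈ A \ B) (hx : x ∈ a) (hx' : x' ∈ a')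
        (h : π x = π x') : a = a' :=
      hdisj.elim_finset (hAE (mem_sdiff.1 ha).1) (hAE (mem_sdiff.1 ha').1) x hx
        (hinj (hI ha hx) (hI ha' hx') h ▸ hx')
    rcases eq_or_eq_or_eq_of_card_le_two (hcard u (hBE (mem_sdiff.1 hu).1)).le hπ₁ hπ₂ hπ₃
      with h | h | h
    exacts [Or.inl (key ha₁ ha₂ hx₁ hx₂ h), Or.inr (Or.inl (key ha₁ ha₃ hx₁ hx₃ h)),
      Or.inr (Or.inr (key ha₂ ha₃ hx₂ hx₃ h))]
  · rw [exchangeGraph_adj_of_mem_right hu] at h₁ h₂ h₃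
    obtain ⟨hb₁, x₁, hx₁, hπ₁⟩ := h₁
    obtain ⟨hb₂, x₂, hx₂, hπ₂⟩ := h₂
    obtain ⟨hb₃, x₃, hx₃, hπ₃⟩ := h₃
    have key {b b' x x'} (hb : b ∈ B \ A) (hb' : b' ∈ B \ A) (hx : π x ∈ b) (hx' : π x' ∈ b')
        (h : x = x') : b = b' :=
      hdisj.elim_finset (hBE (mem_sdiff.1 hb).1) (hBE (mem_sdiff.1 hb').1) _ hx (h ▸ hx')
    rcases eq_or_eq_or_eq_of_card_le_two (hcard u (hAE (mem_sdiff.1 hu).1)).le hx₁ hx₂ hx₃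
      with h | h | h
    exacts [Or.inl (key hb₁ hb₂ hπ₁ hπ₂ h), Or.inr (Or.inl (key hb₁ hb₃ hπ₁ hπ₃ h)),
      Or.inr (Or.inr (key hb₂ hb₃ hπ₂ hπ₃ h))]

lemma feasibleSet_sdiff_union {M : Matroid α} {J : Set α} {T Z : Finset (Finset α)}
    (hπ : M.IsExchangeBijection I J π) (hfix : ∀ x ∈ I ∩ J, π x = x)
    (hdisj : (E : Set (Finset α)).PairwiseDisjoint id) (hAE : A ⊆ E) (hBE : B ⊆ E)
    (hAI : ↑(A.biUnion id) ⊆ I) (hBJ : ↑(B.biUnion id) ⊆ J) (hT : T ⊆ B \ A)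
    (hcl : ∀ b ∈ T, ∀ a ∈ A \ B, (∃ x ∈ a, π x ∈ b) → a ∈ Z) :
    FeasibleSet M (A \ Z ∪ T) := by
  refine (hπ.2 {x ∈ I | π x ∈ (↑(T.biUnion id) : Set α)} fun x hx => hx.1).indep.subset ?_
  intro z hz
  obtain ⟨e, he, hze⟩ := mem_biUnion.1 (mem_coe.1 hz)
  rcases mem_union.1 he with he | he
  · obtain ⟨heA, heZ⟩ := mem_sdiff.1 he
    have hzI : z ∈ I := hAI (mem_coe.2 (mem_biUnion.2 ⟨e, heA, hze⟩))
    refine Or.inr ⟨hzI, fun ⟨_, hzT⟩ => ?_⟩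
    obtain ⟨b, hb, hπb⟩ := mem_biUnion.1 (mem_coe.1 hzT)
    obtain ⟨hbB, hbA⟩ := mem_sdiff.1 (hT hb)
    by_cases heB : e ∈ B
    · rw [hfix z ⟨hzI, hBJ (mem_coe.2 (mem_biUnion.2 ⟨e, heB, hze⟩))⟩] at hπb
      exact hbA (hdisj.elim_finset (hBE hbB) (hAE heA) z hπb hze ▸ heA)
    · exact heZ (hcl b hb e (mem_sdiff.2 ⟨heA, heB⟩) ⟨z, hze, hπb⟩)
  · obtain ⟨x, hxI, rfl⟩ :=
      hπ.1.surjOn (hBJ (mem_coe.2 (mem_biUnion.2 ⟨e, (mem_sdiff.1 (hT he)).1, hze⟩)))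
    exact Or.inl ⟨x, ⟨hxI, mem_coe.2 (mem_biUnion.2 ⟨e, he, hze⟩)⟩, rfl⟩

lemma sum_le_sum_of_exchangeGraph_closed {M : Matroid α} {J : Set α} {w : Finset α → ℝ} {s : ℕ}
    (hπ : M.IsExchangeBijection I J π) (hfix : ∀ x ∈ I ∩ J, π x = x)
    (hdisj : (E : Set (Finset α)).PairwiseDisjoint id) (hAE : A ⊆ E) (hBE : B ⊆ E)
    (hAI : ↑(A.biUnion id) ⊆ I) (hBJ : ↑(B.biUnion id) ⊆ J)
    (hAloc : ∀ Abar Bbar, IsMove M E A s Abar Bbar → ∑ e ∈ Bbar, w e - ∑ e ∈ Abar, w e ≤ 0)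
    {T Z : Finset (Finset α)} (hT : T ⊆ B \ A) (hZ : Z ⊆ A \ B)
    (hcl : ∀ b ∈ T, ∀ a, (exchangeGraph π A B).Adj b a → a ∈ Z) (hsize : #T + #Z ≤ s) :
    ∑ b ∈ T, w b ≤ ∑ a ∈ Z, w a := by
  have hfeas := feasibleSet_sdiff_union hπ hfix hdisj hAE hBE hAI hBJ hT fun b hb a ha hx =>
    hcl b hb a ((exchangeGraph_adj_of_mem_left (hT hb)).2 ⟨ha, hx⟩)
  have hTA : Disjoint T A := disjoint_left.2 fun b hb => (mem_sdiff.1 (hT hb)).2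
  have := hAloc Z T ⟨hZ.trans sdiff_subset, subset_sdiff.2 ⟨hT.trans (sdiff_subset.trans hBE), hTA⟩,
    by omega, symmDiff_union_eq_sdiff_union_s2 (hZ.trans sdiff_subset) hTA ▸ hfeas⟩
  linarith

end ExchangeGraph

lemma add_le_one_add_mul_add {c x y ε t : ℝ} (hε : 0 < ε) (ht : 1 ≤ ε * t) (hc : 0 ≤ c)
    (hy : 0 ≤ y) (hxy : t * x ≤ (t + 1) * y) : c + x ≤ (1 + ε) * (c + y) := by
  have ht0 : 0 < t := by nlinarith
  refine le_of_mul_le_mul_left ?_ ht0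
  nlinarith [mul_nonneg hε.le hc]

theorem unweighted_ptas_guarantee_general
    (M : Matroid α) (S : Finset α) (hground : M.E = ↑S)
    (hsbo : M.StronglyBaseOrderable)
    (E : Finset (Finset α)) (hE : IsPairPartition S E)
    (w : Finset α → ℝ) (hw : ∀ e ∈ E, 0 ≤ w e)
    (ε : ℝ) (hε0 : 0 < ε)
    (t : ℕ) (hteq : t = ⌈1 / ε⌉₊)
    (B : Finset (Finset α)) (hBE : B ⊆ E) (hB : FeasibleSet M B)
    (A : Finset (Finset α)) (hAE : A ⊆ E) (hA : FeasibleSet M A)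
    (hAloc : ∀ Abar Bbar, IsMove M E A (2 * t + 1) Abar Bbar →
      ∑ e ∈ Bbar, w e - ∑ e ∈ Abar, w e ≤ 0) :
    ∑ e ∈ B, w e ≤ (1 + ε) * ∑ e ∈ A, w e := by
  obtain ⟨hcard, hdisj, -⟩ := hE
  obtain ⟨I, hI, hAI⟩ := hA.exists_isBase_superset
  obtain ⟨J, hJ, hBJ⟩ := hB.exists_isBase_superset
  obtain ⟨π₀, hπ₀⟩ := hsbo I J hI hJ
  obtain ⟨π, hπ, hfix⟩ := Matroid.IsExchangeBijection.exists_fixing hπ₀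
    (S.finite_toSet.subset (hground ▸ hI.subset_ground))
  have hcore := SimpleGraph.mul_sum_le_succ_mul_sum disjoint_sdiff_sdiff
    (fun b hb a hba => ((exchangeGraph_adj_of_mem_left hb).1 hba).1)
    (fun a ha b hab => ((exchangeGraph_adj_of_mem_right ha).1 hab).1)
    (exchangeGraph_eq_or_eq_or_eq_of_adj hπ.1.injOn hAI hcard hdisj hAE hBE)
    (fun e he => hw e ((mem_union.1 he).elim (fun h => hBE (mem_sdiff.1 h).1)
      fun h => hAE (mem_sdiff.1 h).1))
    fun T hT Z hZ hcl hsize =>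
      sum_le_sum_of_exchangeGraph_closed hπ hfix hdisj hAE hBE hAI hBJ hAloc hT hZ hcl hsize
  have hεt : 1 ≤ ε * t := by
    rw [hteq, ← div_le_iff₀' hε0]
    exact Nat.le_ceil _
  rw [← sum_inter_add_sum_sdiff B A, ← sum_inter_add_sum_sdiff A B, inter_comm B A]
  exact add_le_one_add_mul_add hε0 hεt (sum_nonneg fun e he => hw e (hAE (mem_inter.1 he).1))
    (sum_nonneg fun e he => hw e (hAE (mem_sdiff.1 he).1)) hcore

theorem unweighted_ptas_guarantee
    (M : Matroid α) (S : Finset α) (hground : M.E = ↑S)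
    (hsbo : M.StronglyBaseOrderable)
    (E : Finset (Finset α)) (hE : IsPairPartition S E)
    (n : ℕ) (hn : E.card = n)
    (w : Finset α → ℝ) (hw : ∀ e ∈ E, 0 ≤ w e)
    (ε : ℝ) (hε0 : 0 < ε) (hε1 : ε < 1)
    (t : ℕ) (hteq : t = ⌈1 / ε⌉₊) (htn : t ≤ n)
    (B : Finset (Finset α)) (hBE : B ⊆ E) (hB : FeasibleSet M B)
    (hBmax : ∀ B' ⊆ E, FeasibleSet M B' → ∑ e ∈ B', w e ≤ ∑ e ∈ B, w e)
    (A : Finset (Finset α)) (hAE : A ⊆ E) (hA : FeasibleSet M A)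
    (hAloc : ∀ Abar Bbar, IsMove M E A (2 * t + 1) Abar Bbar →
      ∑ e ∈ Bbar, w e - ∑ e ∈ Abar, w e ≤ 0) :
    ∑ e ∈ B, w e ≤ (1 + ε) * ∑ e ∈ A, w e :=
  unweighted_ptas_guarantee_general M S hground hsbo E hE w hw ε hε0 t hteq B hBE hB A hAE hA hAloc
end

section
/- Let S be a finite set, let E be a partition of S into n pairs, let ν be a positive integer with ν < n, and let G be a simple graph with vertex set E. Then every matroid on ground set S whose bases are exactly the members of B(M_G) is strongly base orderable. -/
open Finset

variable {α : Type*} [DecidableEq α]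

/-- Membership in the family `B(M_G)`: either `T ⊆ S` has `2ν` elements and is not the union
of `ν` pairs of `E`, or `T = ⋃ F` for a clique `F ⊆ E` of size `ν` in the graph `G`
(whose vertices are the pairs in `E`). -/
def MemBMG (S : Finset α) (E : Finset (Finset α)) (ν : ℕ)
    (G : SimpleGraph (Finset α)) (T : Set α) : Prop :=
  (∃ T' : Finset α, ↑T' = T ∧ T' ⊆ S ∧ T'.card = 2 * ν ∧
      ¬∃ F ⊆ E, F.card = ν ∧ F.biUnion id = T') ∨
  (∃ F ⊆ E, F.card = ν ∧ (↑F : Set (Finset α)).Pairwise G.Adj ∧ ↑(F.biUnion id) = T)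

/-!
Let `m` be the involution exchanging mates. For bases `I` and `J`, let `π` be the identity on
`I ∩ J` and a bijection `σ : I \ J → J \ I` elsewhere. Every exchange `σ(K) ∪ (I \ K)` is a
`2ν`-subset of `S`, hence a base unless it is `m`-invariant (a union of pairs) and differs from
`I` and `J`. So it suffices to find `σ` whose only `m`-invariant exchanges are `I` and `J`.

Such a `σ` is built by induction on `|I \ J|`. After fixing `σ u = v` for a suitable pair, the
mates of `u` and `v` force `u ∉ K` (or `u ∈ K`) in every invariant exchange, which makes it an
exchange for the smaller instance `(I, J - v + u)` (or `(I - u + v, J)`); the pair is chosen so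
that the far end `J - v + u` (or `I - u + v`) of that instance is not invariant. If no pair
forces anything, then `I \ J` and `J \ I` are unions of pairs; complementing `K` inside `I \ J`
then preserves invariance, and reduces the case `u ∈ K` to the case `u ∉ K`.
-/

lemma Finset.exists_bijOn_of_card_eq {β : Type*} {s t : Finset β} (h : s.card = t.card) :
    ∃ f : β → β, Set.BijOn f ↑s ↑t := by
  rcases s.eq_empty_or_nonempty with rfl | ⟨a, -⟩
  · obtain rfl : t = ∅ := card_eq_zero.1 (h.symm.trans card_empty)
    exact ⟨id, by simp⟩
  · have : Nonempty β := ⟨a⟩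
    exact s.finite_toSet.exists_bijOn_of_encard_eq (by simp [Set.encard_coe_eq_coe_finsetCard, h])

lemma Set.BijOn.update_of_erase {σ : α → α} {s t : Finset α} {a b : α}
    (h : Set.BijOn σ ↑(s.erase a) ↑(t.erase b)) (ha : a ∈ s) (hb : b ∈ t) :
    Set.BijOn (Function.update σ a b) ↑s ↑t := by
  have h' : Set.BijOn (Function.update σ a b) ↑(s.erase a) ↑(t.erase b) :=
    h.congr fun x hx => (Function.update_of_ne (ne_of_mem_erase hx) _ _).symm
  have := h'.insert (a := a) (by simp)
  rwa [Function.update_self, ← coe_insert, ← coe_insert, insert_erase ha, insert_erase hb]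
    at this

section Exchange

variable {m σ : α → α} {I J K : Finset α} {u x y : α}

def exchange (σ : α → α) (I K : Finset α) : Finset α := K.image σ ∪ (I \ K)

def IsExchangeRigid (m σ : α → α) (I J : Finset α) : Prop :=
  ∀ K ⊆ I \ J, Set.MapsTo m ↑(exchange σ I K) ↑(exchange σ I K) →
    exchange σ I K = I ∨ exchange σ I K = J

@[simp] lemma exchange_empty : exchange σ I ∅ = I := by simp [exchange]

lemma exchange_sdiff (hσ : Set.BijOn σ ↑(I \ J) ↑(J \ I)) : exchange σ I (I \ J) = J := by
  have himage : (I \ J).image σ = J \ I := by exact_mod_cast hσ.image_eq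
  ext x
  simp only [exchange, himage, mem_union, mem_sdiff]
  tauto

lemma exchange_subset_union (hσ : Set.MapsTo σ ↑(I \ J) ↑(J \ I)) (hK : K ⊆ I \ J) :
    exchange σ I K ⊆ I ∪ J := by
  intro y hy
  simp only [exchange, mem_union, mem_image, mem_sdiff] at hy
  rcases hy with ⟨x, hx, rfl⟩ | ⟨hy, -⟩
  · exact mem_union_right _ (mem_sdiff.1 (hσ (hK hx))).1
  · exact mem_union_left _ hy

lemma inter_subset_exchange (hK : K ⊆ I \ J) : I ∩ J ⊆ exchange σ I K := by
  intro y hy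
  refine mem_union_right _ (mem_sdiff.2 ⟨(mem_inter.1 hy).1, fun hyK => ?_⟩)
  exact (mem_sdiff.1 (hK hyK)).2 (mem_inter.1 hy).2

lemma mem_exchange_iff (hσ : Set.MapsTo σ ↑(I \ J) ↑(J \ I)) (hK : K ⊆ I \ J)
    (hx : x ∈ I \ J) : x ∈ exchange σ I K ↔ x ∉ K := by
  simp only [exchange, mem_union, mem_image, mem_sdiff, (mem_sdiff.1 hx).1, true_and]
  refine or_iff_right fun ⟨w, hw, hwx⟩ => ?_
  exact (mem_sdiff.1 (hσ (hK hw))).2 (hwx ▸ (mem_sdiff.1 hx).1)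

lemma apply_mem_exchange_iff (hσ : Set.BijOn σ ↑(I \ J) ↑(J \ I)) (hK : K ⊆ I \ J)
    (hx : x ∈ I \ J) : σ x ∈ exchange σ I K ↔ x ∈ K := by
  simp only [exchange, mem_union, mem_image, mem_sdiff]
  constructor
  · rintro (⟨w, hw, hwx⟩ | ⟨hxI, -⟩)
    · rwa [← hσ.injOn (coe_subset.2 hK hw) hx hwx]
    · exact absurd hxI (mem_sdiff.1 (hσ.mapsTo hx)).2
  · exact fun h => Or.inl ⟨x, h, rfl⟩

lemma card_exchange (hσ : Set.BijOn σ ↑(I \ J) ↑(J \ I)) (hK : K ⊆ I \ J) :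
    (exchange σ I K).card = I.card := by
  have hKI : K ⊆ I := hK.trans sdiff_subset
  have hdisj : Disjoint (K.image σ) (I \ K) := by
    refine disjoint_left.2 fun y hy hy' => ?_
    obtain ⟨x, hx, rfl⟩ := mem_image.1 hy
    exact (mem_sdiff.1 (hσ.mapsTo (coe_subset.2 hK hx))).2 (mem_sdiff.1 hy').1
  rw [exchange, card_union_of_disjoint hdisj,
    card_image_of_injOn (hσ.injOn.mono (coe_subset.2 hK)), card_sdiff_of_subset hKI]
  have := card_le_card hKI
  omega

lemma eq_empty_of_exchange_eq (hσ : Set.MapsTo σ ↑(I \ J) ↑(J \ I)) (hK : K ⊆ I \ J)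
    (h : exchange σ I K = I) : K = ∅ := by
  refine eq_empty_of_forall_notMem fun x hx => ?_
  have : σ x ∈ I := h ▸ mem_union_left _ (mem_image_of_mem σ hx)
  exact (mem_sdiff.1 (hσ (hK hx))).2 this

lemma isExchangeRigid_of_card_le_one (hσ : Set.BijOn σ ↑(I \ J) ↑(J \ I))
    (h : (I \ J).card ≤ 1) : IsExchangeRigid m σ I J := by
  intro K hK _
  rcases K.eq_empty_or_nonempty with rfl | hK'
  · exact Or.inl exchange_empty
  · rw [eq_of_subset_of_card_le hK (h.trans (card_pos.2 hK')), exchange_sdiff hσ]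
    exact Or.inr rfl

lemma notMem_of_mapsTo_exchange (hm : Function.Involutive m)
    (hσ : Set.BijOn σ ↑(I \ J) ↑(J \ I)) (hK : K ⊆ I \ J)
    (hT : Set.MapsTo m ↑(exchange σ I K) ↑(exchange σ I K)) (hu : u ∈ I \ J)
    (hforced : m u ∈ I ∩ J ∨ m (σ u) ∉ I ∪ J ∨ m u = σ u) : u ∉ K := by
  intro huK
  have hu' : u ∉ exchange σ I K := fun h => (mem_exchange_iff hσ.mapsTo hK hu).1 h huK
  have hv : σ u ∈ exchange σ I K := (apply_mem_exchange_iff hσ hK hu).2 huK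
  rcases hforced with h | h | h
  · exact hu' (hm u ▸ hT (inter_subset_exchange hK h))
  · exact h (exchange_subset_union hσ.mapsTo hK (hT hv))
  · have := hT hv
    rw [← h, hm u] at this
    exact hu' this

lemma mem_of_mapsTo_exchange (hm : Function.Involutive m)
    (hσ : Set.BijOn σ ↑(I \ J) ↑(J \ I)) (hK : K ⊆ I \ J)
    (hT : Set.MapsTo m ↑(exchange σ I K) ↑(exchange σ I K)) (hu : u ∈ I \ J)
    (hforced : m (σ u) ∈ I ∩ J ∨ m u ∉ I ∪ J ∨ m (σ u) = u) : u ∈ K := by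
  by_contra huK
  have hu' : u ∈ exchange σ I K := (mem_exchange_iff hσ.mapsTo hK hu).2 huK
  have hv : σ u ∉ exchange σ I K := fun h => huK ((apply_mem_exchange_iff hσ hK hu).1 h)
  rcases hforced with h | h | h
  · exact hv (hm (σ u) ▸ hT (inter_subset_exchange hK h))
  · exact h (exchange_subset_union hσ.mapsTo hK (hT hu'))
  · have := hT hu'
    rw [← h, hm (σ u)] at this
    exact hv this

lemma mem_exchange_sdiff_iff (hσ : Set.BijOn σ ↑(I \ J) ↑(J \ I)) (hK : K ⊆ I \ J)
    (hy : y ∈ I \ J ∨ y ∈ J \ I) :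
    y ∈ exchange σ I ((I \ J) \ K) ↔ y ∉ exchange σ I K := by
  rcases hy with hy | hy
  · rw [mem_exchange_iff hσ.mapsTo sdiff_subset hy, mem_exchange_iff hσ.mapsTo hK hy, mem_sdiff]
    simp [hy]
  · obtain ⟨x, hx, rfl⟩ := hσ.surjOn hy
    rw [apply_mem_exchange_iff hσ sdiff_subset hx, apply_mem_exchange_iff hσ hK hx, mem_sdiff]
    simp [mem_coe.1 hx]

lemma mapsTo_exchange_sdiff (hm : Function.Involutive m) (hσ : Set.BijOn σ ↑(I \ J) ↑(J \ I))
    (hD : ∀ x ∈ I \ J, m x ∈ I \ J) (hD' : ∀ x ∈ J \ I, m x ∈ J \ I) (hK : K ⊆ I \ J)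
    (hT : Set.MapsTo m ↑(exchange σ I K) ↑(exchange σ I K)) :
    Set.MapsTo m ↑(exchange σ I ((I \ J) \ K)) ↑(exchange σ I ((I \ J) \ K)) := by
  have hX : ∀ z, z ∈ I \ J ∨ z ∈ J \ I → m z ∈ I \ J ∨ m z ∈ J \ I :=
    fun z hz => hz.imp (hD z) (hD' z)
  intro y hy
  have hyIJ := exchange_subset_union hσ.mapsTo sdiff_subset hy
  by_cases hyC : y ∈ I ∩ J
  · have hmyIJ := exchange_subset_union hσ.mapsTo hK (hT (inter_subset_exchange hK hyC))
    have hmyX : ¬ (m y ∈ I \ J ∨ m y ∈ J \ I) := fun h => by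
      have := hX _ h
      rw [hm y] at this
      grind
    exact inter_subset_exchange sdiff_subset (by grind)
  · have hyX : y ∈ I \ J ∨ y ∈ J \ I := by grind
    have hyT := (mem_exchange_sdiff_iff hσ hK hyX).1 hy
    refine (mem_exchange_sdiff_iff hσ hK (hX y hyX)).2 fun h => hyT ?_
    simpa [hm y] using hT h

end Exchange

section Update

open Function

variable {m σ : α → α} {I J K : Finset α} {u v : α}

lemma sdiff_insert_erase (hv : v ∉ I) : I \ insert u (J.erase v) = (I \ J).erase u := by
  ext x; grind

lemma insert_erase_sdiff (hu : u ∈ I) : insert u (J.erase v) \ I = (J \ I).erase v := by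
  ext x; grind

lemma exchange_update_of_notMem (huK : u ∉ K) :
    exchange (update σ u v) I K = exchange σ I K := by
  rw [exchange, exchange, image_congr fun x hx => update_of_ne (ne_of_mem_of_not_mem hx huK) _ _]

lemma exchange_update_of_mem (huK : u ∈ K) (hv : v ∉ I) (hKI : K ⊆ I) :
    exchange (update σ u v) I K = exchange σ (insert v (I.erase u)) (K.erase u) := by
  rw [exchange, exchange, ← insert_erase huK, image_insert, update_self,
    image_congr fun x hx => update_of_ne (ne_of_mem_erase hx) _ _, insert_erase huK]
  ext x; grind

/-- Setting `σ u = v` keeps `u` in every invariant exchange, and the instance `(I, J - v + u)`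
that remains has a non-invariant far end. -/
def IsForcedStay (m : α → α) (I J : Finset α) (u v : α) : Prop :=
  (m u ∈ I ∩ J ∨ m v ∉ I ∪ J ∨ m u = v) ∧
    ¬ Set.MapsTo m ↑(insert u (J.erase v)) ↑(insert u (J.erase v))

lemma IsExchangeRigid.exchange_update_eq_left
    (hrigid : IsExchangeRigid m σ I (insert u (J.erase v)))
    (hJ' : ¬ Set.MapsTo m ↑(insert u (J.erase v)) ↑(insert u (J.erase v)))
    (hv : v ∉ I) (hK : K ⊆ I \ J) (huK : u ∉ K)
    (hT : Set.MapsTo m ↑(exchange (update σ u v) I K) ↑(exchange (update σ u v) I K)) :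
    exchange (update σ u v) I K = I := by
  rw [exchange_update_of_notMem huK] at hT ⊢
  have hK' : K ⊆ I \ insert u (J.erase v) := by
    rw [sdiff_insert_erase hv]
    exact fun x hx => mem_erase.2 ⟨ne_of_mem_of_not_mem hx huK, hK hx⟩
  exact (hrigid K hK' hT).resolve_right fun h => hJ' (h ▸ hT)

lemma IsExchangeRigid.update_of_isForcedStay (hm : Involutive m) (hu : u ∈ I \ J)
    (hv : v ∈ J \ I) (hσ : Set.BijOn σ ↑((I \ J).erase u) ↑((J \ I).erase v))
    (hrigid : IsExchangeRigid m σ I (insert u (J.erase v))) (hstay : IsForcedStay m I J u v) :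
    IsExchangeRigid m (update σ u v) I J := by
  have hbij := hσ.update_of_erase hu hv
  intro K hK hT
  have huK : u ∉ K :=
    notMem_of_mapsTo_exchange hm hbij hK hT hu (by rw [update_self]; exact hstay.1)
  exact Or.inl (hrigid.exchange_update_eq_left hstay.2 (mem_sdiff.1 hv).2 hK huK hT)

lemma IsExchangeRigid.update_of_isForcedStay_swap (hm : Involutive m) (hu : u ∈ I \ J)
    (hv : v ∈ J \ I) (hσ : Set.BijOn σ ↑((I \ J).erase u) ↑((J \ I).erase v))
    (hrigid : IsExchangeRigid m σ (insert v (I.erase u)) J) (hstay : IsForcedStay m J I v u) :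
    IsExchangeRigid m (update σ u v) I J := by
  have hbij := hσ.update_of_erase hu hv
  intro K hK hT
  have huK : u ∈ K := mem_of_mapsTo_exchange hm hbij hK hT hu (by
    rw [update_self, inter_comm, union_comm]; exact hstay.1)
  rw [exchange_update_of_mem huK (mem_sdiff.1 hv).2 (hK.trans sdiff_subset)] at hT ⊢
  have hK' : K.erase u ⊆ insert v (I.erase u) \ J := by
    rw [insert_erase_sdiff (mem_sdiff.1 hv).1]
    exact erase_subset_erase u hK
  exact Or.inr ((hrigid _ hK' hT).resolve_left fun h => hstay.2 (h ▸ hT))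

lemma IsExchangeRigid.update_of_invariant (hm : Involutive m) (hu : u ∈ I \ J)
    (hv : v ∈ J \ I) (hmv : m v ≠ v)
    (hσ : Set.BijOn σ ↑((I \ J).erase u) ↑((J \ I).erase v))
    (hrigid : IsExchangeRigid m σ I (insert u (J.erase v)))
    (hD : ∀ x ∈ I \ J, m x ∈ I \ J) (hD' : ∀ x ∈ J \ I, m x ∈ J \ I) :
    IsExchangeRigid m (update σ u v) I J := by
  have hbij := hσ.update_of_erase hu hv
  have hJ' : ¬ Set.MapsTo m ↑(insert u (J.erase v)) ↑(insert u (J.erase v)) := fun h => by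
    have := @h (m v) (by have := hD' v hv; grind)
    rw [hm v] at this
    grind
  intro K hK hT
  by_cases huK : u ∈ K
  · have hK₂ : (I \ J) \ K ⊆ I \ J := sdiff_subset
    have hK₂_empty := eq_empty_of_exchange_eq hbij.mapsTo hK₂
      (hrigid.exchange_update_eq_left hJ' (mem_sdiff.1 hv).2 hK₂
        (fun h => (mem_sdiff.1 h).2 huK) (mapsTo_exchange_sdiff hm hbij hD hD' hK hT))
    rw [← (sdiff_eq_empty_iff_subset.1 hK₂_empty).antisymm hK, exchange_sdiff hbij]
    exact Or.inr rfl
  · exact Or.inl (hrigid.exchange_update_eq_left hJ' (mem_sdiff.1 hv).2 hK huK hT)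

end Update

section Selection

variable {m : α → α} {I J : Finset α} {u v w : α}

lemma isForcedStay_of_mate_eq (hmu : m u ≠ u) (huv : m u = v) : IsForcedStay m I J u v :=
  ⟨Or.inr (Or.inr huv), fun hJ' => by
    have := hJ' (mem_insert_self u _)
    simp_all⟩

lemma isForcedStay_of_mate_mem_inter (hm : Function.Involutive m) (hu : u ∈ I \ J)
    (hv : v ∈ J \ I) (hmu : m u ∈ I ∩ J) (hmv : m v ∈ J) (hmv' : m v ≠ v) :
    IsForcedStay m I J u v := by
  refine ⟨Or.inl hmu, fun hJ' => ?_⟩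
  have := @hJ' (m v) (by simp [hmv, hmv'])
  rw [hm v] at this
  simp_all

lemma isForcedStay_of_mem_inter_of_notMem_union (hu : u ∈ I) (hmu : m u ∈ I ∩ J)
    (hw : w ∈ J) (hwv : w ≠ v) (hmw : m w ∉ I ∪ J) : IsForcedStay m I J u v := by
  refine ⟨Or.inl hmu, fun hJ' => ?_⟩
  have := @hJ' w (by simp [hwv, hw])
  simp only [coe_insert, coe_erase, Set.mem_insert_iff, Set.mem_sdiff, mem_coe] at this
  grind

lemma isForcedStay_of_notMem_union (hmu : m u ∉ J) (hmu' : m u ≠ u) (hmv : m v ∉ I ∪ J) :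
    IsForcedStay m I J u v :=
  ⟨Or.inr (Or.inl hmv), fun hJ' => by
    have := hJ' (mem_insert_self u _)
    simp_all⟩

lemma exists_isForcedStay (hm : Function.Involutive m) (hfree : ∀ x ∈ I ∪ J, m x ≠ x)
    (hne : (I \ J).Nonempty) (h2 : 1 < (J \ I).card)
    (h : (∃ u ∈ I \ J, m u ∈ J) ∨ ∃ v ∈ J \ I, m v ∉ J) :
    ∃ u ∈ I \ J, ∃ v ∈ J \ I, IsForcedStay m I J u v := by
  have hfreeI : ∀ x ∈ I \ J, m x ≠ x :=
    fun x hx => hfree x (mem_union_left _ (mem_sdiff.1 hx).1)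
  have hfreeJ : ∀ x ∈ J \ I, m x ≠ x :=
    fun x hx => hfree x (mem_union_right _ (mem_sdiff.1 hx).1)
  have hmate : ∀ u ∈ I \ J, m u ∈ J \ I →
      ∃ u ∈ I \ J, ∃ v ∈ J \ I, IsForcedStay m I J u v :=
    fun u hu hmu => ⟨u, hu, m u, hmu, isForcedStay_of_mate_eq (hfreeI u hu) rfl⟩
  have hstay : ∀ u ∈ I \ J, m u ∈ J →
      ∃ u ∈ I \ J, ∃ v ∈ J \ I, IsForcedStay m I J u v := by
    intro u hu hmu
    by_cases hmuI : m u ∉ I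
    · exact hmate u hu (mem_sdiff.2 ⟨hmu, hmuI⟩)
    have hmuC : m u ∈ I ∩ J := mem_inter.2 ⟨not_not.1 hmuI, hmu⟩
    by_cases hv : ∃ v ∈ J \ I, m v ∈ J
    · obtain ⟨v, hv, hmv⟩ := hv
      exact ⟨u, hu, v, hv, isForcedStay_of_mate_mem_inter hm hu hv hmuC hmv (hfreeJ v hv)⟩
    push Not at hv
    obtain ⟨v, hv'⟩ := card_pos.1 (zero_lt_one.trans h2)
    obtain ⟨w, hw, hwv⟩ := exists_mem_ne h2 v
    by_cases hmwI : m w ∈ I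
    · exact hmate (m w) (mem_sdiff.2 ⟨hmwI, hv w hw⟩) (by rw [hm w]; exact hw)
    exact ⟨u, hu, v, hv', isForcedStay_of_mem_inter_of_notMem_union (mem_sdiff.1 hu).1 hmuC
      (mem_sdiff.1 hw).1 hwv (by simp [hmwI, hv w hw])⟩
  rcases h with ⟨u, hu, hmu⟩ | ⟨v, hv, hmv⟩
  · exact hstay u hu hmu
  by_cases hmvI : m v ∈ I
  · exact hmate (m v) (mem_sdiff.2 ⟨hmvI, hmv⟩) (by rw [hm v]; exact hv)
  by_cases hu : ∃ u ∈ I \ J, m u ∉ J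
  · obtain ⟨u, hu, hmu⟩ := hu
    exact ⟨u, hu, v, hv, isForcedStay_of_notMem_union hmu (hfreeI u hu) (by simp [hmv, hmvI])⟩
  push Not at hu
  obtain ⟨u, hu'⟩ := hne
  exact hstay u hu' (hu u hu')

end Selection

theorem exists_isExchangeRigid {m : α → α} (hm : Function.Involutive m) {I J : Finset α}
    (hfree : ∀ x ∈ I ∪ J, m x ≠ x) (hcard : (I \ J).card = (J \ I).card) :
    ∃ σ, Set.BijOn σ ↑(I \ J) ↑(J \ I) ∧ IsExchangeRigid m σ I J := by
  induction hk : (I \ J).card using Nat.strong_induction_on generalizing I J with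
  | _ k ih =>
  obtain hsmall | hbig := le_or_gt k 1
  · obtain ⟨σ, hσ⟩ := exists_bijOn_of_card_eq hcard
    exact ⟨σ, hσ, isExchangeRigid_of_card_le_one hσ (hk ▸ hsmall)⟩
  have ih' : ∀ {u v I' J'}, u ∈ I \ J → v ∈ J \ I → I' \ J' = (I \ J).erase u →
      J' \ I' = (J \ I).erase v → I' ∪ J' ⊆ I ∪ J →
      ∃ σ, Set.BijOn σ ↑((I \ J).erase u) ↑((J \ I).erase v) ∧
        IsExchangeRigid m σ I' J' := by
    intro u v I' J' hu hv hD hD' hsub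
    rw [← hD, ← hD']
    refine ih _ ?_ (fun x hx => hfree x (hsub hx)) ?_ rfl
    · rw [hD, card_erase_of_mem hu]; omega
    · rw [hD, hD', card_erase_of_mem hu, card_erase_of_mem hv, hcard]
  have hne : (I \ J).Nonempty := card_pos.1 (by omega)
  have hne' : (J \ I).Nonempty := card_pos.1 (by omega)
  by_cases h0 : (∃ u ∈ I \ J, m u ∈ J) ∨ ∃ v ∈ J \ I, m v ∉ J
  · obtain ⟨u, hu, v, hv, hstay⟩ := exists_isForcedStay hm hfree hne (by omega) h0
    obtain ⟨σ, hσ, hrigid⟩ := ih' hu hv (sdiff_insert_erase (mem_sdiff.1 hv).2)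
      (insert_erase_sdiff (mem_sdiff.1 hu).1) (fun x => by grind)
    exact ⟨_, hσ.update_of_erase hu hv, hrigid.update_of_isForcedStay hm hu hv hσ hstay⟩
  by_cases h1 : (∃ v ∈ J \ I, m v ∈ I) ∨ ∃ u ∈ I \ J, m u ∉ I
  · obtain ⟨v, hv, u, hu, hstay⟩ :=
      exists_isForcedStay hm (union_comm I J ▸ hfree) hne' (by omega) h1
    obtain ⟨σ, hσ, hrigid⟩ := ih' hu hv (insert_erase_sdiff (mem_sdiff.1 hv).1)
      (sdiff_insert_erase (mem_sdiff.1 hu).2) (fun x => by grind)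
    exact ⟨_, hσ.update_of_erase hu hv, hrigid.update_of_isForcedStay_swap hm hu hv hσ hstay⟩
  push Not at h0 h1
  obtain ⟨u, hu⟩ := hne
  obtain ⟨v, hv⟩ := hne'
  obtain ⟨σ, hσ, hrigid⟩ := ih' hu hv (sdiff_insert_erase (mem_sdiff.1 hv).2)
    (insert_erase_sdiff (mem_sdiff.1 hu).1) (fun x => by grind)
  exact ⟨_, hσ.update_of_erase hu hv,
    hrigid.update_of_invariant hm hu hv (hfree v (mem_union_right _ (mem_sdiff.1 hv).1)) hσ
      (fun x hx => mem_sdiff.2 ⟨h1.2 x hx, h0.1 x hx⟩)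
      (fun x hx => mem_sdiff.2 ⟨h0.2 x hx, h1.1 x hx⟩)⟩

lemma IsPairPartition.exists_mate {S : Finset α} {E : Finset (Finset α)}
    (hE : IsPairPartition S E) :
    ∃ m : α → α, Function.Involutive m ∧ (∀ x ∈ S, m x ≠ x) ∧
      ∀ e ∈ E, ∀ x ∈ e, m x ∈ e := by
  classical
  obtain ⟨hcard, hdisj, hunion⟩ := hE
  let m : α → α := fun x =>
    if h : ∃ y ≠ x, ∃ e ∈ E, x ∈ e ∧ y ∈ e then h.choose else x
  have hmate : ∀ e ∈ E, ∀ x ∈ e, m x ∈ e ∧ m x ≠ x := by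
    intro e he x hx
    have h : ∃ y ≠ x, ∃ e ∈ E, x ∈ e ∧ y ∈ e := by
      obtain ⟨y, hy, hyx⟩ := exists_mem_ne (by rw [hcard e he]; norm_num) x
      exact ⟨y, hyx, e, he, hx, hy⟩
    obtain ⟨hne, f, hf, hxf, hyf⟩ := h.choose_spec
    simp only [m, dif_pos h]
    exact ⟨hdisj.elim hf he (not_disjoint_iff.2 ⟨x, hxf, hx⟩) ▸ hyf, hne⟩
  refine ⟨m, fun x => ?_, fun x hx => ?_, fun e he x hx => (hmate e he x hx).1⟩
  · by_cases h : ∃ e ∈ E, x ∈ e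
    · obtain ⟨e, he, hx⟩ := h
      obtain ⟨a, b, hab, rfl⟩ := card_eq_two.1 (hcard e he)
      have h1 := hmate _ he x hx
      have h2 := hmate _ he (m x) h1.1
      simp only [mem_insert, mem_singleton] at hx h1 h2
      grind
    · have hx : m x = x := dif_neg fun ⟨_, _, e, he, hx, _⟩ => h ⟨e, he, hx⟩
      rw [hx, hx]
  · rw [← hunion] at hx
    obtain ⟨e, he, hxe⟩ := mem_biUnion.1 hx
    exact (hmate e he x hxe).2

section BMG

variable {S : Finset α} {E : Finset (Finset α)} {ν : ℕ} {G : SimpleGraph (Finset α)}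

lemma MemBMG.exists_finset {T : Set α} (hE : IsPairPartition S E) (hT : MemBMG S E ν G T) :
    ∃ T' : Finset α, ↑T' = T ∧ T' ⊆ S ∧ T'.card = 2 * ν := by
  rcases hT with ⟨T', hT', hTS, hcard, -⟩ | ⟨F, hFE, hFcard, -, hFT⟩
  · exact ⟨T', hT', hTS, hcard⟩
  · refine ⟨F.biUnion id, hFT, hE.2.2 ▸ biUnion_subset_biUnion_of_subset_left _ hFE, ?_⟩
    rw [card_biUnion (hE.2.1.subset (coe_subset.2 hFE)),
      sum_congr rfl fun e he => (hE.1 e (hFE he) : (id e).card = 2), sum_const, hFcard,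
      smul_eq_mul, mul_comm]

lemma memBMG_of_not_mapsTo {m : α → α} {T : Finset α}
    (hmE : ∀ e ∈ E, ∀ x ∈ e, m x ∈ e)
    (hTS : T ⊆ S) (hcard : T.card = 2 * ν) (hT : ¬ Set.MapsTo m ↑T ↑T) :
    MemBMG S E ν G ↑T := by
  refine Or.inl ⟨T, rfl, hTS, hcard, ?_⟩
  rintro ⟨F, hFE, -, rfl⟩
  refine hT fun x hx => ?_
  obtain ⟨e, he, hxe⟩ := mem_biUnion.1 hx
  exact mem_biUnion.2 ⟨e, he, hmE e (hFE he) x hxe⟩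

end BMG

section Extension

variable {σ : α → α} {I J : Finset α}

lemma bijOn_ite_mem_of_bijOn_sdiff (hσ : Set.BijOn σ ↑(I \ J) ↑(J \ I)) :
    Set.BijOn (fun x => if x ∈ J then x else σ x) ↑I ↑J := by
  have hD : ∀ x ∈ I \ J, σ x ∈ J \ I := fun x hx => hσ.mapsTo hx
  refine ⟨fun x hx => ?_, fun x hx y hy hxy => ?_, fun y hy => ?_⟩
  · by_cases hxJ : x ∈ J
    · simp [hxJ]
    · simpa [hxJ] using (mem_sdiff.1 (hD x (mem_sdiff.2 ⟨hx, hxJ⟩))).1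
  · by_cases hxJ : x ∈ J <;> by_cases hyJ : y ∈ J <;>
      simp only [hxJ, hyJ, if_true, if_false] at hxy
    · exact hxy
    · exact absurd hx (hxy ▸ (mem_sdiff.1 (hD y (mem_sdiff.2 ⟨hy, hyJ⟩))).2)
    · exact absurd hy (hxy ▸ (mem_sdiff.1 (hD x (mem_sdiff.2 ⟨hx, hxJ⟩))).2)
    · exact hσ.injOn (mem_sdiff.2 ⟨hx, hxJ⟩) (mem_sdiff.2 ⟨hy, hyJ⟩) hxy
  · by_cases hyI : y ∈ I
    · exact ⟨y, hyI, by simp [mem_coe.1 hy]⟩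
    · obtain ⟨x, hx, rfl⟩ := hσ.surjOn (mem_sdiff.2 ⟨hy, hyI⟩)
      exact ⟨x, (mem_sdiff.1 hx).1, by simp [(mem_sdiff.1 hx).2]⟩

lemma image_ite_mem_union_sdiff {K : Finset α} (hK : K ⊆ I) :
    (fun x => if x ∈ J then x else σ x) '' ↑K ∪ (↑I \ ↑K) =
      ↑(exchange σ I (K \ J)) := by
  rw [← coe_image, ← coe_sdiff, ← coe_union, exchange]
  congr 1
  ext x
  simp only [mem_union, mem_image, mem_sdiff]
  grind

end Extension

theorem MG_stronglyBaseOrderable_general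
    (S : Finset α) (E : Finset (Finset α)) (hE : IsPairPartition S E)
    (ν : ℕ)
    (G : SimpleGraph (Finset α))
    (M : Matroid α)
    (hbase : ∀ T : Set α, M.IsBase T ↔ MemBMG S E ν G T) :
    M.StronglyBaseOrderable := by
  obtain ⟨m, hm, hfree, hmE⟩ := hE.exists_mate
  intro I J hI hJ
  obtain ⟨I, rfl, hIS, hIcard⟩ := ((hbase _).1 hI).exists_finset hE
  obtain ⟨J, rfl, hJS, hJcard⟩ := ((hbase _).1 hJ).exists_finset hE
  obtain ⟨σ, hσ, hrigid⟩ := exists_isExchangeRigid hm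
    (fun x hx => hfree x (union_subset hIS hJS hx)) (card_sdiff_comm (hIcard.trans hJcard.symm))
  refine ⟨_, bijOn_ite_mem_of_bijOn_sdiff hσ, fun K hK => ?_⟩
  obtain ⟨K, rfl⟩ : ∃ K' : Finset α, ↑K' = K :=
    ⟨(I.finite_toSet.subset hK).toFinset, by simp⟩
  have hKD : K \ J ⊆ I \ J := sdiff_subset_sdiff (coe_subset.1 hK) le_rfl
  rw [image_ite_mem_union_sdiff (coe_subset.1 hK)]
  by_cases hT : Set.MapsTo m ↑(exchange σ I (K \ J)) ↑(exchange σ I (K \ J))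
  · rcases hrigid _ hKD hT with h | h <;> rw [h] <;> assumption
  · rw [hbase]
    exact memBMG_of_not_mapsTo hmE
      ((exchange_subset_union hσ.mapsTo hKD).trans (union_subset hIS hJS))
      ((card_exchange hσ hKD).trans hIcard) hT

theorem MG_stronglyBaseOrderable
    (S : Finset α) (E : Finset (Finset α)) (hE : IsPairPartition S E)
    (n : ℕ) (hn : E.card = n)
    (ν : ℕ) (hν : 1 ≤ ν) (hνn : ν < n)
    (G : SimpleGraph (Finset α))
    (M : Matroid α) (hground : M.E = ↑S)
    (hbase : ∀ T : Set α, M.IsBase T ↔ MemBMG S E ν G T) :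
    M.StronglyBaseOrderable :=
  MG_stronglyBaseOrderable_general S E hE ν G M hbase
end

section
/- Let S be a finite set, let E be a partition of S into n pairs, let ν be a positive integer with ν < n, and let G be a simple graph with vertex set E. Then there exists a matroid on ground set S whose bases are exactly the members of B(M_G). -/
open Finset

variable {α : Type*} [DecidableEq α]

/-!
`M_G` is a sparse paving matroid: its bases are the `2ν`-subsets of `S` avoiding the family `𝓗`
of unions of `ν` pairs that do not form a clique. Distinct members `F₁.biUnion id`, `F₂.biUnion id`
of `𝓗` differ in `2 #(F₁ \ F₂) ≥ 2` elements, and for any family with this property the `k`-subsets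
avoiding it satisfy basis exchange: exchanging `a` for `b` either lands on the other base (when only
one `b` is available), or there are two candidates `b₁ ≠ b₂` whose outcomes differ in a single
element, so they cannot both lie in `𝓗`. The same one-element swap produces a base when
`0 < k < #S`.
-/

section SparsePaving

variable {S : Finset α} {k : ℕ} {𝓗 : Set (Finset α)}

def IsSparsePavingBase (S : Finset α) (k : ℕ) (𝓗 : Set (Finset α)) (B : Set α) : Prop :=
  ∃ T : Finset α, ↑T = B ∧ T ⊆ S ∧ #T = k ∧ T ∉ 𝓗

theorem notMem_of_card_sdiff_eq_one (h𝓗 : ∀ H₁ ∈ 𝓗, ∀ H₂ ∈ 𝓗, #(H₁ \ H₂) ≠ 1)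
    {T₁ T₂ : Finset α} (h : #(T₁ \ T₂) = 1) (hT₁ : T₁ ∈ 𝓗) : T₂ ∉ 𝓗 :=
  fun hT₂ => h𝓗 T₁ hT₁ T₂ hT₂ h

theorem isSparsePavingBase_insert_sdiff_singleton {T : Finset α} (hTS : T ⊆ S) (hTk : #T = k)
    {a b : α} (ha : a ∈ T) (hbS : b ∈ S) (hbT : b ∉ T) (h𝓗 : insert b (T.erase a) ∉ 𝓗) :
    IsSparsePavingBase S k 𝓗 (insert b (↑T \ {a})) := by
  refine ⟨insert b (T.erase a), by push_cast; rfl, ?_, ?_, h𝓗⟩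
  · exact insert_subset hbS ((erase_subset a T).trans hTS)
  · rw [card_insert_of_notMem (fun h => hbT (mem_of_mem_erase h)), card_erase_of_mem ha, hTk]
    have := card_pos.mpr ⟨a, ha⟩
    omega

theorem insert_erase_eq_of_sdiff_eq_singleton {s t : Finset α} {a b : α}
    (hst : s \ t = {a}) (hts : t \ s = {b}) : insert b (s.erase a) = t := by
  ext x
  have hx₁ := congrArg (x ∈ ·) hst
  have hx₂ := congrArg (x ∈ ·) hts
  have ha := congrArg (a ∈ ·) hst
  have hb := congrArg (b ∈ ·) hts
  simp only [mem_sdiff, mem_singleton, eq_iff_iff, iff_true] at hx₁ hx₂ ha hb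
  simp only [mem_insert, mem_erase]
  grind

theorem exchangeProperty_isSparsePavingBase (h𝓗 : ∀ H₁ ∈ 𝓗, ∀ H₂ ∈ 𝓗, #(H₁ \ H₂) ≠ 1) :
    Matroid.ExchangeProperty (IsSparsePavingBase S k 𝓗) := by
  intro _ _ hT₁ hT₂ a ha
  obtain ⟨T₁, rfl, hT₁S, hT₁k, -⟩ := hT₁
  obtain ⟨T₂, rfl, hT₂S, hT₂k, hT₂𝓗⟩ := hT₂
  obtain ⟨haT₁, haT₂⟩ := ha
  simp only [mem_coe] at haT₁ haT₂
  have hcard : #(T₂ \ T₁) = #(T₁ \ T₂) := card_sdiff_comm (hT₂k.trans hT₁k.symm)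
  have hpos : 0 < #(T₂ \ T₁) := hcard ▸ card_pos.mpr ⟨a, mem_sdiff.mpr ⟨haT₁, haT₂⟩⟩
  suffices ∃ b ∈ T₂ \ T₁, insert b (T₁.erase a) ∉ 𝓗 by
    obtain ⟨b, hb, hb𝓗⟩ := this
    rw [mem_sdiff] at hb
    exact ⟨b, by simpa using hb,
      isSparsePavingBase_insert_sdiff_singleton hT₁S hT₁k haT₁ (hT₂S hb.1) hb.2 hb𝓗⟩
  obtain hone | htwo : #(T₂ \ T₁) = 1 ∨ 1 < #(T₂ \ T₁) := by omega
  · obtain ⟨b, hb⟩ := card_eq_one.mp hone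
    have ha : T₁ \ T₂ = {a} := (eq_of_subset_of_card_le
      (singleton_subset_iff.mpr (mem_sdiff.mpr ⟨haT₁, haT₂⟩))
      (by rw [card_singleton, ← hcard, hone])).symm
    exact ⟨b, by simp [hb], insert_erase_eq_of_sdiff_eq_singleton ha hb ▸ hT₂𝓗⟩
  · obtain ⟨b₁, hb₁, b₂, hb₂, hb₁₂⟩ := one_lt_card.mp htwo
    have hb₁' : b₁ ∉ T₁.erase a := fun h => (mem_sdiff.mp hb₁).2 (mem_of_mem_erase h)
    by_cases h₁ : insert b₁ (T₁.erase a) ∈ 𝓗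
    · exact ⟨b₂, hb₂, notMem_of_card_sdiff_eq_one h𝓗
        (by rw [insert_sdiff_insert' hb₁₂ hb₁', card_singleton]) h₁⟩
    · exact ⟨b₁, hb₁, h₁⟩

theorem exists_isSparsePavingBase (h𝓗 : ∀ H₁ ∈ 𝓗, ∀ H₂ ∈ 𝓗, #(H₁ \ H₂) ≠ 1)
    (hk : 0 < k) (hkS : k < #S) : ∃ B, IsSparsePavingBase S k 𝓗 B := by
  obtain ⟨T, hTS, hTk⟩ := exists_subset_card_eq hkS.le
  by_cases hT𝓗 : T ∈ 𝓗
  · obtain ⟨x, hx⟩ := card_pos.mp (hTk ▸ hk)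
    obtain ⟨y, hy⟩ := sdiff_nonempty.mpr fun hST => (card_le_card hST).not_gt (hTk ▸ hkS)
    rw [mem_sdiff] at hy
    have hxy : x ≠ y := fun h => hy.2 (h ▸ hx)
    have hT : #(T \ insert y (T.erase x)) = 1 := by
      nth_rewrite 1 [← insert_erase hx]
      rw [insert_sdiff_insert' hxy (notMem_erase x T), card_singleton]
    exact ⟨_, isSparsePavingBase_insert_sdiff_singleton hTS hTk hx hy.1 hy.2
      (notMem_of_card_sdiff_eq_one h𝓗 hT hT𝓗)⟩
  · exact ⟨T, T, rfl, hTS, hTk, hT𝓗⟩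

theorem exists_matroid_isBase_iff_isSparsePavingBase
    (h𝓗 : ∀ H₁ ∈ 𝓗, ∀ H₂ ∈ 𝓗, #(H₁ \ H₂) ≠ 1) (hk : 0 < k) (hkS : k < #S) :
    ∃ M : Matroid α, M.E = ↑S ∧ ∀ B, M.IsBase B ↔ IsSparsePavingBase S k 𝓗 B :=
  ⟨Matroid.ofIsBaseOfFinite S.finite_toSet _ (exists_isSparsePavingBase h𝓗 hk hkS)
    (exchangeProperty_isSparsePavingBase h𝓗) (fun _ ⟨_, hT, hTS, _⟩ => hT ▸ coe_subset.mpr hTS),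
    rfl, fun _ => Iff.rfl⟩

end SparsePaving

namespace IsPairPartition

variable {S : Finset α} {E F F₁ F₂ : Finset (Finset α)} (hE : IsPairPartition S E)
include hE

theorem card_biUnion (hF : F ⊆ E) : #(F.biUnion id) = 2 * #F := by
  rw [Finset.card_biUnion (hE.2.1.subset hF)]
  simp only [id]
  rw [sum_congr rfl fun e he => hE.1 e (hF he), sum_const, smul_eq_mul, mul_comm]

theorem card_eq_two_mul : #S = 2 * #E := hE.2.2 ▸ hE.card_biUnion Subset.rfl

theorem biUnion_sdiff_biUnion (hF₁ : F₁ ⊆ E) (hF₂ : F₂ ⊆ E) :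
    F₁.biUnion id \ F₂.biUnion id = (F₁ \ F₂).biUnion id := by
  ext x
  simp only [mem_sdiff, mem_biUnion, id, not_exists, not_and]
  constructor
  · rintro ⟨⟨e, he, hxe⟩, hx⟩
    exact ⟨e, ⟨he, fun he₂ => hx e he₂ hxe⟩, hxe⟩
  · rintro ⟨e, ⟨he₁, he₂⟩, hxe⟩
    refine ⟨⟨e, he₁, hxe⟩, fun f hf hxf => ?_⟩
    have hef : e ≠ f := fun h => he₂ (h ▸ hf)
    exact disjoint_left.mp (hE.2.1 (hF₁ he₁) (hF₂ hf) hef) hxe hxf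

theorem card_biUnion_sdiff_biUnion (hF₁ : F₁ ⊆ E) (hF₂ : F₂ ⊆ E) :
    #(F₁.biUnion id \ F₂.biUnion id) = 2 * #(F₁ \ F₂) := by
  rw [hE.biUnion_sdiff_biUnion hF₁ hF₂, hE.card_biUnion (sdiff_subset.trans hF₁)]

theorem eq_of_biUnion_id_eq (hF₁ : F₁ ⊆ E) (hF₂ : F₂ ⊆ E) (h : F₁.biUnion id = F₂.biUnion id) :
    F₁ = F₂ := by
  have h₁₂ := hE.card_biUnion_sdiff_biUnion hF₁ hF₂
  have h₂₁ := hE.card_biUnion_sdiff_biUnion hF₂ hF₁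
  rw [h, Finset.sdiff_self, card_empty] at h₁₂ h₂₁
  exact (sdiff_eq_empty_iff_subset.mp (card_eq_zero.mp (by omega))).antisymm
    (sdiff_eq_empty_iff_subset.mp (card_eq_zero.mp (by omega)))

end IsPairPartition

/-- The circuit-hyperplanes of `M_G`. -/
def nonCliqueUnions (E : Finset (Finset α)) (ν : ℕ) (G : SimpleGraph (Finset α)) :
    Set (Finset α) :=
  {H | ∃ F ⊆ E, #F = ν ∧ ¬(↑F : Set (Finset α)).Pairwise G.Adj ∧ F.biUnion id = H}

section CircuitHyperplanes

variable {S : Finset α} {E : Finset (Finset α)} {ν : ℕ} {G : SimpleGraph (Finset α)}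

theorem card_sdiff_ne_one_of_mem_nonCliqueUnions (hE : IsPairPartition S E) :
    ∀ H₁ ∈ nonCliqueUnions E ν G, ∀ H₂ ∈ nonCliqueUnions E ν G, #(H₁ \ H₂) ≠ 1 := by
  rintro _ ⟨F₁, hF₁, -, -, rfl⟩ _ ⟨F₂, hF₂, -, -, rfl⟩
  rw [hE.card_biUnion_sdiff_biUnion hF₁ hF₂]
  omega

theorem memBMG_iff_isSparsePavingBase (hE : IsPairPartition S E) {T : Set α} :
    MemBMG S E ν G T ↔ IsSparsePavingBase S (2 * ν) (nonCliqueUnions E ν G) T := by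
  constructor
  · rintro (⟨T', rfl, hT'S, hT'card, hT'⟩ | ⟨F, hF, hFcard, hFclique, rfl⟩)
    · exact ⟨T', rfl, hT'S, hT'card, fun ⟨F, hF, hFcard, _, hFT'⟩ => hT' ⟨F, hF, hFcard, hFT'⟩⟩
    · refine ⟨F.biUnion id, rfl, hE.2.2 ▸ biUnion_subset_biUnion_of_subset_left id hF,
        by rw [hE.card_biUnion hF, hFcard], ?_⟩
      rintro ⟨F', hF', -, hF'clique, hF'F⟩
      exact hF'clique (hE.eq_of_biUnion_id_eq hF' hF hF'F ▸ hFclique)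
  · rintro ⟨T', rfl, hT'S, hT'card, hT'⟩
    by_cases hunion : ∃ F ⊆ E, #F = ν ∧ F.biUnion id = T'
    · obtain ⟨F, hF, hFcard, rfl⟩ := hunion
      exact Or.inr ⟨F, hF, hFcard, not_not.mp fun h => hT' ⟨F, hF, hFcard, h, rfl⟩, rfl⟩
    · exact Or.inl ⟨T', rfl, hT'S, hT'card, hunion⟩

end CircuitHyperplanes

theorem exists_MG_matroid
    (S : Finset α) (E : Finset (Finset α)) (hE : IsPairPartition S E)
    (n : ℕ) (hn : E.card = n)
    (ν : ℕ) (hν : 1 ≤ ν) (hνn : ν < n)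
    (G : SimpleGraph (Finset α)) :
    ∃ M : Matroid α, M.E = ↑S ∧ ∀ T : Set α, M.IsBase T ↔ MemBMG S E ν G T := by
  have hS : #S = 2 * n := hn ▸ hE.card_eq_two_mul
  obtain ⟨M, hME, hM⟩ := exists_matroid_isBase_iff_isSparsePavingBase
    (card_sdiff_ne_one_of_mem_nonCliqueUnions (ν := ν) (G := G) hE)
    (show 0 < 2 * ν by omega) (show 2 * ν < #S by omega)
  exact ⟨M, hME, fun T => (hM T).trans (memBMG_iff_isSparsePavingBase hE).symm⟩
end

section
/- Let S be a finite set, let E be a partition of S into n pairs, let ν be a positive integer with ν < n, let G be a simple graph with vertex set E, and let M_G be a matroid on S whose bases are exactly the members of B(M_G). Then there exists a set F ⊆ E with |F| = ν such that ⋃F is independent in M_G if and only if G contains a clique of size ν. -/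
open Finset

variable {α : Type*} [DecidableEq α]

/-!
Extend an independent union `⋃ F` of `ν` pairs to a base `T`. As `⋃ F` already has `2ν` elements,
`T` cannot be a base of the first kind, which is never a union of `ν` pairs. So `T = ⋃ F'` for a
`ν`-clique `F'`; disjoint nonempty pairs are recovered from their union, so `F ⊆ F'`, hence `F = F'`.
-/

theorem Finset.card_biUnion_id_of_card_eq {F : Finset (Finset α)} {k : ℕ}
    (hdisj : (F : Set (Finset α)).PairwiseDisjoint id) (hk : ∀ e ∈ F, e.card = k) :
    (F.biUnion id).card = F.card * k := by
  rw [card_biUnion hdisj]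
  exact sum_const_nat hk

theorem Finset.subset_of_biUnion_id_subset {E F F' : Finset (Finset α)}
    (hdisj : (E : Set (Finset α)).PairwiseDisjoint id) (hne : ∀ e ∈ F, e.Nonempty)
    (hF : F ⊆ E) (hF' : F' ⊆ E) (h : F.biUnion id ⊆ F'.biUnion id) : F ⊆ F' := by
  intro e he
  obtain ⟨x, hx⟩ := hne e he
  obtain ⟨f, hf, hxf⟩ := mem_biUnion.1 (h (mem_biUnion.2 ⟨e, he, hx⟩))
  rwa [hdisj.elim_finset (hF he) (hF' hf) x hx hxf]

theorem pairwise_adj_of_indep_biUnion {S : Finset α} {E : Finset (Finset α)} {ν : ℕ}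
    {G : SimpleGraph (Finset α)} {M : Matroid α} (hE : IsPairPartition S E)
    (hbase : ∀ T : Set α, M.IsBase T ↔ MemBMG S E ν G T) {F : Finset (Finset α)} (hFE : F ⊆ E)
    (hF : F.card = ν) (hind : M.Indep ↑(F.biUnion id)) : (F : Set (Finset α)).Pairwise G.Adj := by
  obtain ⟨hcard, hdisj, -⟩ := hE
  have hcardU : ∀ F' ⊆ E, (F'.biUnion id).card = 2 * F'.card := fun F' hF' => by
    rw [card_biUnion_id_of_card_eq (hdisj.subset hF') fun e he => hcard e (hF' he), mul_comm]
  obtain ⟨T, hT, hFT⟩ := hind.exists_isBase_superset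
  rcases (hbase T).1 hT with ⟨T, rfl, -, hTcard, hnot⟩ | ⟨F', hF'E, hF'card, hF'adj, rfl⟩
  · refine absurd ⟨F, hFE, hF, eq_of_subset_of_card_le (coe_subset.1 hFT) ?_⟩ hnot
    rw [hTcard, hcardU F hFE, hF]
  · have hFF' : F ⊆ F' := subset_of_biUnion_id_subset hdisj
      (fun e he => card_pos.1 (by rw [hcard e (hFE he)]; decide)) hFE hF'E (coe_subset.1 hFT)
    rwa [eq_of_subset_of_card_le hFF' (by rw [hF, hF'card])]

theorem MG_feasible_matching_iff_clique_general
    (S : Finset α) (E : Finset (Finset α)) (hE : IsPairPartition S E)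
    (ν : ℕ)
    (G : SimpleGraph (Finset α))
    (M : Matroid α)
    (hbase : ∀ T : Set α, M.IsBase T ↔ MemBMG S E ν G T) :
    (∃ F ⊆ E, F.card = ν ∧ M.Indep ↑(F.biUnion id)) ↔
      (∃ F ⊆ E, F.card = ν ∧ (↑F : Set (Finset α)).Pairwise G.Adj) := by
  refine ⟨fun ⟨F, hFE, hF, hind⟩ => ⟨F, hFE, hF, pairwise_adj_of_indep_biUnion hE hbase hFE hF hind⟩,
    fun ⟨F, hFE, hF, hadj⟩ => ⟨F, hFE, hF, ?_⟩⟩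
  exact ((hbase _).2 (Or.inr ⟨F, hFE, hF, hadj, rfl⟩)).indep

theorem MG_feasible_matching_iff_clique
    (S : Finset α) (E : Finset (Finset α)) (hE : IsPairPartition S E)
    (n : ℕ) (hn : E.card = n)
    (ν : ℕ) (hν : 1 ≤ ν) (hνn : ν < n)
    (G : SimpleGraph (Finset α))
    (M : Matroid α) (hground : M.E = ↑S)
    (hbase : ∀ T : Set α, M.IsBase T ↔ MemBMG S E ν G T) :
    (∃ F ⊆ E, F.card = ν ∧ M.Indep ↑(F.biUnion id)) ↔
      (∃ F ⊆ E, F.card = ν ∧ (↑F : Set (Finset α)).Pairwise G.Adj) :=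
  MG_feasible_matching_iff_clique_general S E hE ν G M hbase
end

section
/- Let M be a matroid on a finite ground set S, let E be a partition of S into n pairs, and let w : E → ℝ≥0. Let e₁, …, e_n be an enumeration of E with w(e₁) ≥ w(e₂) ≥ … ≥ w(e_n), and define the greedy solution by A₀ = ∅ and, for i = 1, …, n, A_i = A_{i−1} ∪ {e_i} if ⋃(A_{i−1} ∪ {e_i}) is independent in M and A_i = A_{i−1} otherwise. Then A_n is feasible and for every feasible set of pairs B ⊆ E one has w(B) ≤ 2·w(A_n); that is, the greedy solution is a 2-approximation for the weighted matroid parity problem. -/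
/-
Fix a prefix `g 0, …, g (m-1)` of the enumeration, let `I = ⋃ A m` and let `P` be the pairs of
`B` in that prefix. A pair of `P` outside `A m` was rejected against a subset of `A m`, so it
cannot be added to `I`. Extending `I` to a basis `J` of `I ∪ ⋃ P`, the set `J \ I` therefore
meets each pair of `P` in at most one element, whence `2 |P| ≤ |J| ≤ |I| + |P| ≤ 2 |A m| + |P|`,
i.e. `|P| ≤ 2 |A m|`. Since the weights decrease along the enumeration, Abel summation turns
these prefix inequalities into `w(B) ≤ 2 w(A n)`.
-/

open Finset

variable {α : Type*} [DecidableEq α]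

theorem Matroid.Indep.card_pairs_le_card_of_maximal {M : Matroid α} {I : Finset α}
    {P : Finset (Finset α)} (hI : M.Indep ↑I) (hP : M.Indep ↑(P.biUnion id))
    (hcard : ∀ p ∈ P, p.card = 2) (hdisj : (P : Set (Finset α)).PairwiseDisjoint id)
    (hmax : ∀ p ∈ P, M.Indep ↑(I ∪ p) → p ⊆ I) :
    P.card ≤ I.card := by
  set Y := I ∪ P.biUnion id
  have hYE : (Y : Set α) ⊆ M.E := by
    rw [coe_union]; exact Set.union_subset hI.subset_ground hP.subset_ground
  obtain ⟨J, hJ, hIJ⟩ := hI.subset_isBasis_of_subset (by simp [Y]) hYE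
  lift J to Finset α using Y.finite_toSet.subset hJ.subset
  have hPJ : 2 * P.card ≤ J.card := by
    have h := hP.encard_le_eRk_of_subset (show _ ⊆ (Y : Set α) by simp [Y])
    rw [← hJ.encard_eq_eRk, Set.encard_coe_eq_coe_finsetCard,
      Set.encard_coe_eq_coe_finsetCard, card_biUnion hdisj] at h
    simp only [id, sum_congr rfl hcard, sum_const, smul_eq_mul] at h
    rw [mul_comm]; exact_mod_cast h
  have hpair : ∀ p ∈ P, ((p ∩ J) \ I).card ≤ 1 := by
    intro p hp
    by_cases hpJ : p ⊆ J
    · have : M.Indep ↑(I ∪ p) := hJ.indep.subset (by simpa using ⟨hIJ, hpJ⟩)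
      simp [sdiff_eq_empty_iff_subset.mpr ((inter_subset_left).trans (hmax p hp this))]
    · have : (p ∩ J).card < 2 := hcard p hp ▸ card_lt_card
        ⟨inter_subset_left, fun h => hpJ (h.trans inter_subset_right)⟩
      exact (card_le_card sdiff_subset).trans (by omega)
  have hJI : (J \ I).card ≤ P.card := calc
    (J \ I).card ≤ (P.biUnion fun p => (p ∩ J) \ I).card := by
      refine card_le_card fun x hx => ?_
      obtain ⟨hxJ, hxI⟩ := mem_sdiff.mp hx
      have : x ∈ Y := by exact_mod_cast hJ.subset hxJ
      obtain ⟨p, hp, hxp⟩ := mem_biUnion.mp ((mem_union.mp this).resolve_left hxI)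
      exact mem_biUnion.mpr ⟨p, hp, by simp_all⟩
    _ ≤ P.card := card_biUnion_le_card_mul _ _ _ hpair |>.trans_eq (mul_one _)
  have := card_le_card_sdiff_add_card (s := J) (t := I)
  omega

theorem Fin.filter_val_lt_succ {n m : ℕ} (hm : m < n) :
    ({i | i.val < m + 1} : Finset (Fin n)) =
      insert ⟨m, hm⟩ ({i | i.val < m} : Finset (Fin n)) := by
  ext i; simp [Fin.ext_iff]; omega

theorem sum_mul_nonneg_of_antitone_of_prefix_sums_nonneg {R : Type*} [Semiring R]
    [PartialOrder R] [IsOrderedRing R] {n : ℕ} {w d : Fin n → R} (hw : Antitone w)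
    (hw0 : ∀ i, 0 ≤ w i)
    (hd : ∀ m ≤ n, 0 ≤ ∑ i : Fin n with i.val < m, d i) :
    0 ≤ ∑ i, w i * d i := by
  have hprefix : ∀ m ≤ n, ∀ c, (∀ i : Fin n, i.val < m → c ≤ w i) →
      c * ∑ i : Fin n with i.val < m, d i ≤ ∑ i : Fin n with i.val < m, w i * d i := by
    intro m
    induction m with
    | zero => simp
    | succ m ih =>
      intro hm c hcw
      set k : Fin n := ⟨m, by omega⟩
      have hk : k ∉ ({i | i.val < m} : Finset (Fin n)) := by simp [k]
      have hD := hd (m + 1) hm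
      rw [Fin.filter_val_lt_succ hm] at hD ⊢
      rw [sum_insert hk] at hD
      rw [sum_insert hk, sum_insert hk]
      have hS := ih (Nat.le_of_succ_le hm) (w k) fun i hi => hw (Fin.mk_le_mk.mpr hi.le)
      calc c * (d k + ∑ i : Fin n with i.val < m, d i)
          ≤ w k * (d k + ∑ i : Fin n with i.val < m, d i) :=
            mul_le_mul_of_nonneg_right (hcw k (Nat.lt_succ_self m)) hD
        _ ≤ w k * d k + ∑ i : Fin n with i.val < m, w i * d i := by rw [mul_add]; gcongr
  simpa using hprefix n le_rfl 0 fun i _ => hw0 i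

theorem Function.Injective.sum_ite_mem_eq_sum {ι β M : Type*} [Fintype ι] [DecidableEq β]
    [AddCommMonoid M] {g : ι → β} (hg : Function.Injective g) {X : Finset β}
    (hX : X ⊆ univ.image g) (f : β → M) :
    ∑ j, (if g j ∈ X then f (g j) else 0) = ∑ e ∈ X, f e := by
  rw [← sum_image (f := fun e => if e ∈ X then f e else 0) hg.injOn, sum_ite_mem,
    inter_eq_right.mpr hX]

structure IsGreedySequence (M : Matroid α) {n : ℕ} (g : Fin n → Finset α)
    (A : ℕ → Finset (Finset α)) : Prop where
  zero : A 0 = ∅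
  succ_of_feasible : ∀ i : Fin n,
    FeasibleSet M (insert (g i) (A i)) → A (i + 1) = insert (g i) (A i)
  succ_of_not_feasible : ∀ i : Fin n,
    ¬FeasibleSet M (insert (g i) (A i)) → A (i + 1) = A i

namespace IsGreedySequence

variable {M : Matroid α} {n : ℕ} {g : Fin n → Finset α} {A : ℕ → Finset (Finset α)}

theorem subset_succ (hA : IsGreedySequence M g A) (i : Fin n) : A i ⊆ A (i + 1) := by
  by_cases h : FeasibleSet M (insert (g i) (A i))
  · rw [hA.succ_of_feasible i h]; exact subset_insert _ _
  · rw [hA.succ_of_not_feasible i h]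

theorem mono (hA : IsGreedySequence M g A) {i j : ℕ} (hij : i ≤ j) (hj : j ≤ n) :
    A i ⊆ A j := by
  induction j, hij using Nat.le_induction with
  | base => exact Subset.rfl
  | succ j _ ih => exact (ih (by omega)).trans (hA.subset_succ ⟨j, hj⟩)

theorem feasible (hA : IsGreedySequence M g A) {i : ℕ} (hi : i ≤ n) : FeasibleSet M (A i) := by
  induction i with
  | zero => simp [hA.zero, FeasibleSet]
  | succ i ih =>
    by_cases h : FeasibleSet M (insert (g ⟨i, hi⟩) (A i))
    · rwa [hA.succ_of_feasible ⟨i, hi⟩ h]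
    · rw [hA.succ_of_not_feasible ⟨i, hi⟩ h]; exact ih (by omega)

theorem exists_index_of_mem (hA : IsGreedySequence M g A) {i : ℕ} (hi : i ≤ n) {e : Finset α}
    (he : e ∈ A i) : ∃ j : Fin n, j.val < i ∧ g j = e := by
  induction i with
  | zero => simp [hA.zero] at he
  | succ i ih =>
    by_cases h : FeasibleSet M (insert (g ⟨i, hi⟩) (A i))
    · rw [hA.succ_of_feasible ⟨i, hi⟩ h, mem_insert] at he
      rcases he with rfl | he
      · exact ⟨⟨i, hi⟩, Nat.lt_succ_self i, rfl⟩
      · obtain ⟨j, hj, rfl⟩ := ih (by omega) he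
        exact ⟨j, by omega, rfl⟩
    · rw [hA.succ_of_not_feasible ⟨i, hi⟩ h] at he
      obtain ⟨j, hj, rfl⟩ := ih (by omega) he
      exact ⟨j, by omega, rfl⟩

theorem not_indep_union_of_not_mem (hA : IsGreedySequence M g A) {i : ℕ} (hi : i ≤ n)
    {j : Fin n} (hji : j.val < i) (hj : g j ∉ A i) : ¬M.Indep ↑((A i).biUnion id ∪ g j) := by
  by_cases h : FeasibleSet M (insert (g j) (A j))
  · have := hA.mono (Nat.succ_le_of_lt hji) hi (hA.succ_of_feasible j h ▸ mem_insert_self _ _)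
    exact absurd this hj
  · refine fun hind => h (hind.subset ?_)
    rw [biUnion_insert, coe_union, coe_union, Set.union_comm]
    exact Set.union_subset_union_left _
      (by exact_mod_cast biUnion_subset_biUnion_of_subset_left _ (hA.mono hji.le hi))

theorem card_le_card_filter_mem (hA : IsGreedySequence M g A) {m : ℕ} (hm : m ≤ n) :
    #(A m) ≤ #{j | j.val < m ∧ g j ∈ A n} := by
  refine (card_le_card fun e he => ?_).trans (card_image_le (f := g))
  obtain ⟨j, hj, rfl⟩ := hA.exists_index_of_mem hm he
  exact mem_image.mpr ⟨j, by simpa using ⟨hj, hA.mono hm le_rfl he⟩, rfl⟩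

theorem card_filter_mem_le (hA : IsGreedySequence M g A) {E : Finset (Finset α)}
    (hcard : ∀ e ∈ E, e.card = 2) (hdisj : (E : Set (Finset α)).PairwiseDisjoint id)
    (hgE : ∀ j, g j ∈ E) (hg : Function.Injective g) {B : Finset (Finset α)} (hBE : B ⊆ E)
    (hB : FeasibleSet M B) {m : ℕ} (hm : m ≤ n) :
    #{j | j.val < m ∧ g j ∈ B} ≤ 2 * #{j | j.val < m ∧ g j ∈ A n} := by
  set P := ({j | j.val < m ∧ g j ∈ B} : Finset (Fin n)).image g
  have hPB : P ⊆ B := by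
    intro p hp
    obtain ⟨j, hj, rfl⟩ := mem_image.mp hp
    exact (mem_filter.mp hj).2.2
  have hAE : A m ⊆ E := fun e he => by
    obtain ⟨j, -, rfl⟩ := hA.exists_index_of_mem hm he
    exact hgE j
  have hmax : ∀ p ∈ P, M.Indep ↑((A m).biUnion id ∪ p) → p ⊆ (A m).biUnion id := by
    intro p hp hind
    obtain ⟨j, hj, rfl⟩ := mem_image.mp hp
    by_contra hnot
    exact hA.not_indep_union_of_not_mem hm (mem_filter.mp hj).2.1
      (fun h => hnot (subset_biUnion_of_mem id h)) hind
  have hPI := (hA.feasible hm).card_pairs_le_card_of_maximal (hB.subset (by gcongr))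
    (fun p hp => hcard p (hBE (hPB hp))) (hdisj.subset (hPB.trans hBE)) hmax
  have hI : #((A m).biUnion id) ≤ #(A m) * 2 :=
    card_biUnion_le_card_mul _ _ _ fun e he => (hcard e (hAE he)).le
  rw [card_image_of_injective _ hg] at hPI
  have := hA.card_le_card_filter_mem hm
  omega

end IsGreedySequence

theorem greedy_two_approximation_general
    (M : Matroid α) (S : Finset α)
    (E : Finset (Finset α)) (hE : IsPairPartition S E)
    (n : ℕ) (hn : E.card = n)
    (w : Finset α → ℝ) (hw : ∀ e ∈ E, 0 ≤ w e)
    -- `g 0, g 1, …, g (n-1)` is an enumeration of `E` in decreasing order of weight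
    (g : Fin n → Finset α) (hgmem : ∀ i, g i ∈ E) (hginj : Function.Injective g)
    (hgsorted : ∀ i j : Fin n, i ≤ j → w (g j) ≤ w (g i))
    -- `A` is the sequence of greedy solutions
    (A : ℕ → Finset (Finset α)) (hA0 : A 0 = ∅)
    (hAstep : ∀ i : Fin n,
      (FeasibleSet M (insert (g i) (A i)) → A (i + 1) = insert (g i) (A i)) ∧
      (¬FeasibleSet M (insert (g i) (A i)) → A (i + 1) = A i)) :
    FeasibleSet M (A n) ∧
      ∀ B ⊆ E, FeasibleSet M B → ∑ e ∈ B, w e ≤ 2 * ∑ e ∈ A n, w e := by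
  obtain ⟨hcard, hdisj, -⟩ := hE
  have hA : IsGreedySequence M g A := ⟨hA0, fun i => (hAstep i).1, fun i => (hAstep i).2⟩
  refine ⟨hA.feasible le_rfl, fun B hBE hB => ?_⟩
  have hEg : E ⊆ univ.image g := (eq_of_subset_of_card_le
    (image_subset_iff.mpr fun j _ => hgmem j) (by simp [card_image_of_injective _ hginj, hn])).ge
  have hAE : A n ⊆ E := fun e he => by
    obtain ⟨j, -, rfl⟩ := hA.exists_index_of_mem le_rfl he
    exact hgmem j
  have habel := sum_mul_nonneg_of_antitone_of_prefix_sums_nonneg (w := fun j => w (g j))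
    (d := fun j => 2 * (if g j ∈ A n then 1 else 0) - (if g j ∈ B then 1 else 0))
    hgsorted (fun j => hw _ (hgmem j)) fun m hm => by
      have := hA.card_filter_mem_le hcard hdisj hgmem hginj hBE hB hm
      rw [sum_sub_distrib, ← mul_sum, sum_boole, sum_boole, filter_filter, filter_filter,
        sub_nonneg]
      exact_mod_cast this
  simp only [mul_sub, mul_ite, mul_one, mul_zero, sum_sub_distrib, sub_nonneg] at habel
  rw [hginj.sum_ite_mem_eq_sum (hBE.trans hEg),
    hginj.sum_ite_mem_eq_sum (f := fun e => w e * 2) (hAE.trans hEg), ← sum_mul] at habel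
  linarith

theorem greedy_two_approximation
    (M : Matroid α) (S : Finset α) (hground : M.E = ↑S)
    (E : Finset (Finset α)) (hE : IsPairPartition S E)
    (n : ℕ) (hn : E.card = n)
    (w : Finset α → ℝ) (hw : ∀ e ∈ E, 0 ≤ w e)
    -- `g 0, g 1, …, g (n-1)` is an enumeration of `E` in decreasing order of weight
    (g : Fin n → Finset α) (hgmem : ∀ i, g i ∈ E) (hginj : Function.Injective g)
    (hgsorted : ∀ i j : Fin n, i ≤ j → w (g j) ≤ w (g i))
    -- `A` is the sequence of greedy solutions
    (A : ℕ → Finset (Finset α)) (hA0 : A 0 = ∅)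
    (hAstep : ∀ i : Fin n,
      (FeasibleSet M (insert (g i) (A i)) → A (i + 1) = insert (g i) (A i)) ∧
      (¬FeasibleSet M (insert (g i) (A i)) → A (i + 1) = A i)) :
    FeasibleSet M (A n) ∧
      ∀ B ⊆ E, FeasibleSet M B → ∑ e ∈ B, w e ≤ 2 * ∑ e ∈ A n, w e :=
  greedy_two_approximation_general M S E hE n hn w hw g hgmem hginj hgsorted A hA0 hAstep
end
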